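/- arXiv:1706.01904 — 10 statements merged into one kernel-verified Lean document; each statement's English description precedes it below -/
import Mathlib

section
/- Let A be a closed dissipative operator on a separable complex Hilbert space H such that the eigenspace ker(A* − i) = {x ∈ D(A*) : A*x = i·x} is finite dimensional, and let Â be a dissipative extension of A. Then Â is maximally dissipative if and only if the dimension of the quotient space D(Â)/D(A) equals dim ker(A* − i). -/
noncomputable section

open Complex

variable {H : Type*} [NormedAddCommGroup H] [InnerProductSpace ℂ H] [CompleteSpace H]

local notation "⟪" x ", " y "⟫" => @inner ℂ _ _ x y

/-- A partially defined operator is *dissipative* if `Im ⟪ψ, A ψ⟫ ≥ 0` for all `ψ` in its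
domain. -/
def Dissipative (A : H →ₗ.[ℂ] H) : Prop :=
  ∀ ψ : A.domain, 0 ≤ (⟪(ψ : H), A ψ⟫).im

/-- A partially defined operator is *symmetric* if `⟪f, S g⟫ = ⟪S f, g⟫` on its domain. -/
def IsSymmetricP (S : H →ₗ.[ℂ] H) : Prop :=
  ∀ f g : S.domain, ⟪(f : H), S g⟫ = ⟪S f, (g : H)⟫

/-- A partially defined operator is *non-negative* if `⟪f, V f⟫` is real and `≥ 0` on its
domain. -/
def NonnegP (V : H →ₗ.[ℂ] H) : Prop :=
  ∀ f : V.domain, (⟪(f : H), V f⟫).im = 0 ∧ 0 ≤ (⟪(f : H), V f⟫).re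

/-- The eigenspace `ker (A* - i)` of the adjoint of `A`. -/
def eigenspaceI (A : H →ₗ.[ℂ] H) : Submodule ℂ A.adjoint.domain :=
  LinearMap.ker (A.adjoint.toFun - Complex.I • A.adjoint.domain.subtype)

/-- A dissipative operator is *maximally dissipative* if it has no nontrivial dissipative
extension. -/
def MaximallyDissipative (A : H →ₗ.[ℂ] H) : Prop :=
  Dissipative A ∧ ∀ B : H →ₗ.[ℂ] H, A ≤ B → Dissipative B → B = A

/-!
Write `R = ran (A + i)`. Dissipativity gives `‖(B + i) ψ‖² ≥ ‖B ψ‖² + ‖ψ‖²`, so `B + i` is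
injective for every dissipative `B`, and `R` is closed because `A + i` dominates the graph norm
on the closed graph of `A`. The orthogonal complement of `R` is `ker (A* - i)`, hence
`H ⧸ R ≃ ker (A* - i)` is finite dimensional. The injective map `Â + i` sends `D(A)` onto `R`,
so it embeds `D(Â) ⧸ D(A)` into `H ⧸ R` with image `ran (Â + i) ⧸ R`; equal dimensions
therefore mean `ran (Â + i) = H`. Finally a dissipative `B` with closed `ran (B + i)` is maximal
iff `ran (B + i) = H`: a nonzero `x ⊥ ran (B + i)` lies outside `D(B)`, and setting `B x = i x`
gives a proper dissipative extension.
-/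

section

variable {E : Type*} [NormedAddCommGroup E] [InnerProductSpace ℂ E]

def plusI (B : E →ₗ.[ℂ] E) : B.domain →ₗ[ℂ] E :=
  B.toFun + I • B.domain.subtype

theorem plusI_apply (B : E →ₗ.[ℂ] E) (ψ : B.domain) : plusI B ψ = B ψ + I • (ψ : E) :=
  rfl

theorem plusI_inclusion {A B : E →ₗ.[ℂ] E} (h : A ≤ B) (ψ : A.domain) :
    plusI B (Submodule.inclusion h.1 ψ) = plusI A ψ := by
  rw [plusI_apply, plusI_apply, ← LinearPMap.apply_comp_inclusion h]
  rfl

theorem range_plusI_mono {A B : E →ₗ.[ℂ] E} (h : A ≤ B) :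
    LinearMap.range (plusI A) ≤ LinearMap.range (plusI B) := by
  rintro _ ⟨ψ, rfl⟩
  exact ⟨_, plusI_inclusion h ψ⟩

theorem norm_add_I_smul_sq (x y : E) :
    ‖y + I • x‖ ^ 2 = ‖y‖ ^ 2 + ‖x‖ ^ 2 + 2 * (⟪x, y⟫).im := by
  rw [@norm_add_sq ℂ, norm_smul, Complex.norm_I, one_mul, inner_smul_right,
    ← inner_conj_symm x y]
  simp only [RCLike.re_to_complex, Complex.mul_re, Complex.I_re, Complex.I_im,
    Complex.conj_im]
  ring

theorem inner_self_eq_ofReal_sq_norm (x : E) : ⟪x, x⟫ = ((‖x‖ ^ 2 : ℝ) : ℂ) := by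
  simp [inner_self_eq_norm_sq_to_K]

theorem inner_apply_of_mem_orthogonal_range_plusI {B : E →ₗ.[ℂ] E} {x : E}
    (hx : x ∈ (LinearMap.range (plusI B))ᗮ) (ψ : B.domain) :
    ⟪x, B ψ⟫ = -(I * ⟪x, (ψ : E)⟫) := by
  have h : ⟪x, plusI B ψ⟫ = 0 :=
    (Submodule.mem_orthogonal' _ _).mp hx _ (LinearMap.mem_range_self _ ψ)
  rw [plusI_apply, inner_add_right, inner_smul_right] at h
  exact eq_neg_of_add_eq_zero_left h

namespace Dissipative

variable {B : E →ₗ.[ℂ] E}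

theorem sq_norm_add_sq_norm_le (hB : Dissipative B) (ψ : B.domain) :
    ‖B ψ‖ ^ 2 + ‖(ψ : E)‖ ^ 2 ≤ ‖plusI B ψ‖ ^ 2 := by
  rw [plusI_apply, norm_add_I_smul_sq]
  linarith [hB ψ]

theorem norm_le_norm_plusI (hB : Dissipative B) (ψ : B.domain) :
    ‖(ψ : E)‖ ≤ ‖plusI B ψ‖ :=
  le_of_sq_le_sq (by nlinarith [hB.sq_norm_add_sq_norm_le ψ]) (norm_nonneg _)

theorem norm_apply_le_norm_plusI (hB : Dissipative B) (ψ : B.domain) :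
    ‖B ψ‖ ≤ ‖plusI B ψ‖ :=
  le_of_sq_le_sq (by nlinarith [hB.sq_norm_add_sq_norm_le ψ]) (norm_nonneg _)

theorem plusI_injective (hB : Dissipative B) : Function.Injective (plusI B) := by
  refine (injective_iff_map_eq_zero _).mpr fun ψ hψ => ?_
  have := hB.norm_le_norm_plusI ψ
  rw [hψ, norm_zero] at this
  exact Subtype.ext (norm_le_zero_iff.mp this)

theorem isClosed_range_plusI [CompleteSpace E] (hB : Dissipative B) (hclosed : B.IsClosed) :
    IsClosed (LinearMap.range (plusI B) : Set E) := by
  let L : E × E →L[ℂ] E := ContinuousLinearMap.snd ℂ E E + I • ContinuousLinearMap.fst ℂ E E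
  have : CompleteSpace B.graph :=
    (show IsClosed (B.graph : Set (E × E)) from hclosed).completeSpace_coe
  have hrange : (LinearMap.range (plusI B) : Set E) = Set.range (L.comp B.graph.subtypeL) := by
    ext y
    constructor
    · rintro ⟨ψ, rfl⟩
      exact ⟨⟨(ψ, B ψ), B.mem_graph ψ⟩, rfl⟩
    · rintro ⟨⟨⟨_, _⟩, hp⟩, rfl⟩
      obtain ⟨ψ, rfl, rfl⟩ := B.mem_graph_iff.mp hp
      exact ⟨ψ, rfl⟩
  have hanti : AntilipschitzWith 1 (L.comp B.graph.subtypeL) := by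
    refine ContinuousLinearMap.antilipschitz_of_bound _ fun ⟨⟨_, _⟩, hp⟩ => ?_
    obtain ⟨ψ, rfl, rfl⟩ := B.mem_graph_iff.mp hp
    simpa [L] using ⟨hB.norm_le_norm_plusI ψ, hB.norm_apply_le_norm_plusI ψ⟩
  rw [hrange]
  exact hanti.isClosed_range (L.comp _).uniformContinuous

theorem notMem_domain_of_mem_orthogonal (hB : Dissipative B) {x : E}
    (hx : x ∈ (LinearMap.range (plusI B))ᗮ) (hx0 : x ≠ 0) : x ∉ B.domain := by
  intro hxB
  have h := hB ⟨x, hxB⟩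
  rw [inner_apply_of_mem_orthogonal_range_plusI hx, inner_self_eq_ofReal_sq_norm] at h
  have : 0 < ‖x‖ := norm_pos_iff.mpr hx0
  simp only [Complex.neg_im, Complex.mul_im, Complex.I_re, Complex.I_im, Complex.ofReal_re,
    Complex.ofReal_im] at h
  nlinarith

theorem supSpanSingleton (hB : Dissipative B) {x : E}
    (hx : x ∈ (LinearMap.range (plusI B))ᗮ) (hxB : x ∉ B.domain) :
    Dissipative (B.supSpanSingleton x (I • x) hxB) := by
  -- The cross terms cancel since `⟪x, B φ⟫ = -i ⟪x, φ⟫`, leaving `Im ⟪φ, B φ⟫ + |c|² ‖x‖²`.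
  rintro ⟨_, hψ⟩
  obtain ⟨φ, hφ, _, hc, rfl⟩ := Submodule.mem_sup.mp hψ
  obtain ⟨c, rfl⟩ := Submodule.mem_span_singleton.mp hc
  rw [LinearPMap.supSpanSingleton_apply_mk _ _ _ _ _ hφ]
  have hxφ := inner_apply_of_mem_orthogonal_range_plusI hx ⟨φ, hφ⟩
  have hφB := hB ⟨φ, hφ⟩
  simp only [inner_add_left, inner_add_right, inner_smul_left, inner_smul_right, hxφ,
    ← inner_conj_symm x φ, inner_self_eq_ofReal_sq_norm, RingHom.id_apply] at hφB ⊢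
  simp only [Complex.add_im, Complex.add_re, Complex.mul_im, Complex.mul_re, Complex.neg_im,
    Complex.neg_re, Complex.I_re, Complex.I_im, Complex.conj_re, Complex.conj_im,
    Complex.ofReal_re, Complex.ofReal_im]
  nlinarith [sq_nonneg c.re, sq_nonneg c.im, sq_nonneg ‖x‖]

theorem maximallyDissipative_of_range_plusI_eq_top (hB : Dissipative B)
    (hsurj : LinearMap.range (plusI B) = ⊤) : MaximallyDissipative B := by
  refine ⟨hB, fun C hBC hC => (LinearPMap.eq_of_le_of_domain_eq hBC ?_).symm⟩
  refine le_antisymm hBC.1 fun x hx => ?_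
  obtain ⟨ψ, hψ⟩ : plusI C ⟨x, hx⟩ ∈ LinearMap.range (plusI B) := hsurj ▸ Submodule.mem_top
  rw [← plusI_inclusion hBC] at hψ
  exact (show (ψ : E) = x from congrArg Subtype.val (hC.plusI_injective hψ)) ▸ ψ.2

end Dissipative

theorem MaximallyDissipative.range_plusI_eq_top [CompleteSpace E] {B : E →ₗ.[ℂ] E}
    (hB : MaximallyDissipative B) (hclosed : IsClosed (LinearMap.range (plusI B) : Set E)) :
    LinearMap.range (plusI B) = ⊤ := by
  have : CompleteSpace (LinearMap.range (plusI B)) := hclosed.completeSpace_coe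
  rw [← Submodule.orthogonal_eq_bot_iff, Submodule.eq_bot_iff]
  by_contra! ⟨x, hx, hx0⟩
  have hxB := hB.1.notMem_domain_of_mem_orthogonal hx hx0
  have hext := hB.2 _ (LinearPMap.left_le_sup _ _ _) (hB.1.supSpanSingleton hx hxB)
  exact hxB (hext ▸ Submodule.mem_sup_right (Submodule.mem_span_singleton_self x))

theorem Dissipative.maximallyDissipative_iff_range_plusI_eq_top [CompleteSpace E]
    {B : E →ₗ.[ℂ] E} (hB : Dissipative B)
    (hclosed : IsClosed (LinearMap.range (plusI B) : Set E)) :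
    MaximallyDissipative B ↔ LinearMap.range (plusI B) = ⊤ :=
  ⟨fun h => h.range_plusI_eq_top hclosed, hB.maximallyDissipative_of_range_plusI_eq_top⟩

theorem mem_eigenspaceI [CompleteSpace E] {A : E →ₗ.[ℂ] E} {y : A.adjoint.domain} :
    y ∈ eigenspaceI A ↔ A.adjoint y = I • (y : E) := by
  simp [eigenspaceI, sub_eq_zero]

theorem map_subtype_eigenspaceI [CompleteSpace E] {A : E →ₗ.[ℂ] E}
    (hdense : Dense (A.domain : Set E)) :
    Submodule.map A.adjoint.domain.subtype (eigenspaceI A) = (LinearMap.range (plusI A))ᗮ := by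
  ext x
  constructor
  · rintro ⟨y, hy, rfl⟩
    rw [Submodule.mem_orthogonal']
    rintro _ ⟨ψ, rfl⟩
    rw [plusI_apply, inner_add_right, inner_smul_right, Submodule.subtype_apply,
      ← LinearPMap.adjoint_isFormalAdjoint hdense y ψ, mem_eigenspaceI.mp hy, inner_smul_left,
      Complex.conj_I]
    ring
  · intro hx
    have hadj : ∀ ψ : A.domain, ⟪I • x, (ψ : E)⟫ = ⟪x, A ψ⟫ := fun ψ => by
      rw [inner_apply_of_mem_orthogonal_range_plusI hx, inner_smul_left, Complex.conj_I, neg_mul]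
    have hxA : x ∈ A.adjoint.domain := LinearPMap.mem_adjoint_domain_of_exists x ⟨_, hadj⟩
    exact ⟨⟨x, hxA⟩, mem_eigenspaceI.mpr (LinearPMap.adjoint_apply_eq hdense _ hadj), rfl⟩

def eigenspaceIEquivQuotient [CompleteSpace E] {A : E →ₗ.[ℂ] E}
    (hdense : Dense (A.domain : Set E)) (hclosed : IsClosed (LinearMap.range (plusI A) : Set E)) :
    eigenspaceI A ≃ₗ[ℂ] E ⧸ LinearMap.range (plusI A) :=
  haveI : CompleteSpace (LinearMap.range (plusI A)) := hclosed.completeSpace_coe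
  (Submodule.equivMapOfInjective _ (Submodule.injective_subtype _) _).trans <|
    (LinearEquiv.ofEq _ _ (map_subtype_eigenspaceI hdense)).trans <|
      (Submodule.quotientEquivOfIsCompl _ _ (Submodule.isCompl_orthogonal _)).symm

theorem ker_mkQ_comp_plusI {A B : E →ₗ.[ℂ] E} (hAB : A ≤ B) (hB : Dissipative B) :
    LinearMap.ker ((LinearMap.range (plusI A)).mkQ ∘ₗ plusI B)
      = Submodule.comap B.domain.subtype A.domain := by
  ext ψ
  simp only [LinearMap.mem_ker, LinearMap.comp_apply, Submodule.mkQ_apply,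
    Submodule.Quotient.mk_eq_zero, Submodule.mem_comap, Submodule.subtype_apply]
  constructor
  · rintro ⟨φ, hφ⟩
    rw [← plusI_inclusion hAB] at hφ
    exact (show (φ : E) = ψ from congrArg Subtype.val (hB.plusI_injective hφ)) ▸ φ.2
  · intro hψ
    exact ⟨⟨ψ, hψ⟩, plusI_inclusion hAB ⟨ψ, hψ⟩ ▸ rfl⟩

theorem rank_quotient_domain_eq_iff_range_plusI_eq_top {A B : E →ₗ.[ℂ] E} (hAB : A ≤ B)
    (hB : Dissipative B)
    [FiniteDimensional ℂ (E ⧸ LinearMap.range (plusI A))] :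
    Module.rank ℂ (B.domain ⧸ Submodule.comap B.domain.subtype A.domain)
        = Module.rank ℂ (E ⧸ LinearMap.range (plusI A)) ↔
      LinearMap.range (plusI B) = ⊤ := by
  set f := (LinearMap.range (plusI A)).mkQ ∘ₗ plusI B
  rw [← ker_mkQ_comp_plusI hAB hB, f.quotKerEquivRange.rank_eq, ← Module.finrank_eq_rank,
    ← Module.finrank_eq_rank, Nat.cast_inj, ← Submodule.eq_top_iff_finrank_eq,
    LinearMap.range_comp, Submodule.map_mkQ_eq_top, sup_eq_right.mpr (range_plusI_mono hAB)]

end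

theorem statement0_general
    (A Ahat : H →ₗ.[ℂ] H)
    (hdense : Dense (A.domain : Set H)) (hclosed : A.IsClosed) (hdiss : Dissipative A)
    (hfin : FiniteDimensional ℂ (eigenspaceI A))
    (hext : A ≤ Ahat) (hhatdiss : Dissipative Ahat) :
    MaximallyDissipative Ahat ↔
      Module.rank ℂ (↥Ahat.domain ⧸ Submodule.comap Ahat.domain.subtype A.domain)
        = Module.rank ℂ (eigenspaceI A) := by
  have hR : IsClosed (LinearMap.range (plusI A) : Set H) := hdiss.isClosed_range_plusI hclosed
  let e := eigenspaceIEquivQuotient hdense hR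
  have : FiniteDimensional ℂ (H ⧸ LinearMap.range (plusI A)) := e.finiteDimensional
  rw [e.rank_eq, rank_quotient_domain_eq_iff_range_plusI_eq_top hext hhatdiss,
    hhatdiss.maximallyDissipative_iff_range_plusI_eq_top
      (Submodule.isClosed_mono_of_finiteDimensional_quotient hR (range_plusI_mono hext))]

/-- A dissipative extension `Â` of a closed dissipative operator `A` with
finite-dimensional `ker(A* - i)` is maximally dissipative iff
`dim D(Â)/D(A) = dim ker(A* - i)`. -/
theorem statement0 [TopologicalSpace.SeparableSpace H]
    (A Ahat : H →ₗ.[ℂ] H)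
    (hdense : Dense (A.domain : Set H)) (hclosed : A.IsClosed) (hdiss : Dissipative A)
    (hfin : FiniteDimensional ℂ (eigenspaceI A))
    (hext : A ≤ Ahat) (hhatdiss : Dissipative Ahat) :
    MaximallyDissipative Ahat ↔
      Module.rank ℂ (↥Ahat.domain ⧸ Submodule.comap Ahat.domain.subtype A.domain)
        = Module.rank ℂ (eigenspaceI A) :=
  statement0_general A Ahat hdense hclosed hdiss hfin hext hhatdiss
end
end

section
/- Let V be a non-negative closed densely defined symmetric operator on a complex Hilbert space H, let V̂ be a non-negative selfadjoint extension of V, and let W be a non-negative selfadjoint operator with W∘W = V̂ (i.e., W = V̂^{1/2}). Then for every h ∈ H the following equality holds in [0, +∞]: sup{ |⟨h, Vf⟩|² / ⟨f, Vf⟩ : f ∈ D(V), Vf ≠ 0 } = sup{ |⟨h, Wg⟩|² : g ∈ ran(W↾_{D(V)}), ‖g‖ = 1 }. (Consequently, by the Ando–Nishio theorem, h belongs to the domain of the square root of the Kreĭn–von Neumann extension of V exactly when the right-hand side is finite, in which case it equals ‖V_K^{1/2}h‖².) -/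
noncomputable section

open Complex

variable {H : Type*} [NormedAddCommGroup H] [InnerProductSpace ℂ H] [CompleteSpace H]

local notation "⟪" x ", " y "⟫" => @inner ℂ _ _ x y

/-- `T = W ∘ W` as partially defined operators: the domain of `T` is
`{x ∈ D(W) : W x ∈ D(W)}` and there `T x = W (W x)`. -/
def IsSqrtOf (W T : H →ₗ.[ℂ] H) : Prop :=
  (∀ x : H, x ∈ T.domain ↔ ∃ hx : x ∈ W.domain, W ⟨x, hx⟩ ∈ W.domain) ∧
  ∀ (x : H) (hxT : x ∈ T.domain) (hxW : x ∈ W.domain) (hWx : W ⟨x, hxW⟩ ∈ W.domain),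
    T ⟨x, hxT⟩ = W ⟨W ⟨x, hxW⟩, hWx⟩

/-- The Ando–Nishio supremum `sup { |⟪h, V f⟫|² / ⟪f, V f⟫ : f ∈ D(V), V f ≠ 0 }`,
computed in `[0, ∞]`. -/
def anSup (V : H →ₗ.[ℂ] H) (h : H) : ENNReal :=
  ⨆ f : {f : V.domain // V f ≠ 0},
    ENNReal.ofReal (‖⟪h, V f.1⟫‖ ^ 2) / ENNReal.ofReal ((⟪(f.1 : H), V f.1⟫).re)

/-- For a non-negative closed densely defined symmetric operator `V`, a
non-negative selfadjoint extension `V̂` of `V` and `W = V̂^{1/2}`, the Ando–Nishio supremum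
`sup |⟪h, V f⟫|²/⟪f, V f⟫` coincides with
`sup { |⟪h, W g⟫|² : g ∈ ran(W↾_{D(V)}), ‖g‖ = 1 }` in `[0, ∞]`. -/
theorem statement1
    (V Vhat W : H →ₗ.[ℂ] H)
    (hVdense : Dense (V.domain : Set H)) (hVclosed : V.IsClosed)
    (hVsymm : IsSymmetricP V) (hVnn : NonnegP V)
    (hVhat_sa : IsSelfAdjoint Vhat) (hVhat_nn : NonnegP Vhat) (hext : V ≤ Vhat)
    (hWsa : IsSelfAdjoint W) (hWnn : NonnegP W) (hsq : IsSqrtOf W Vhat)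
    (h : H) :
    anSup V h =
      ⨆ g : {g : W.domain //
          (∃ (f : H) (_ : f ∈ V.domain) (hfW : f ∈ W.domain), W ⟨f, hfW⟩ = (g : H)) ∧
          ‖(g : H)‖ = 1},
        ENNReal.ofReal (‖⟪h, W g.1⟫‖ ^ 2) := by
  have hWd : Dense (W.domain : Set H) := hWsa.dense_domain
  have hWsymm : ∀ a b : W.domain, ⟪W a, (b : H)⟫ = ⟪(a : H), W b⟫ := by
    have hfa := LinearPMap.adjoint_isFormalAdjoint hWd
    rw [LinearPMap.isSelfAdjoint_def] at hWsa
    rw [hWsa] at hfa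
    exact hfa
  apply le_antisymm
  · refine iSup_le fun f => ?_
    obtain ⟨⟨f, hfV⟩, hVf⟩ := f
    have hfVhat : f ∈ Vhat.domain := hext.1 hfV
    obtain ⟨hfW, hWfW⟩ := (hsq.1 f).mp hfVhat
    set wf : W.domain := ⟨W ⟨f, hfW⟩, hWfW⟩ with hwf
    have hVeq : V ⟨f, hfV⟩ = W wf := by
      rw [hext.2 (y := ⟨f, hfVhat⟩) rfl, hsq.2 f hfVhat hfW hWfW]
    have hwf0 : (wf : H) ≠ 0 := by
      intro h0
      apply hVf
      rw [hVeq, show wf = 0 from Subtype.ext h0]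
      exact W.toFun.map_zero
    set t : ℝ := ‖(wf : H)‖ with htdef
    have ht : 0 < t := norm_pos_iff.mpr hwf0
    have hip : ⟪f, V ⟨f, hfV⟩⟫ = ((t ^ 2 : ℝ) : ℂ) := by
      rw [hVeq, ← hWsymm ⟨f, hfW⟩ wf]
      show ⟪(wf : H), (wf : H)⟫ = _
      rw [inner_self_eq_norm_sq_to_K]
      norm_cast
    have hre : (⟪f, V ⟨f, hfV⟩⟫).re = t ^ 2 := by rw [hip]; norm_cast
    set c : ℂ := ((t⁻¹ : ℝ) : ℂ) with hcdef
    set gd : W.domain := c • wf with hgd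
    have hgdnorm : ‖(gd : H)‖ = 1 := by
      rw [hgd, Submodule.coe_smul, norm_smul, hcdef]
      simp only [Complex.norm_real, Real.norm_eq_abs, abs_inv, abs_of_pos ht, ← htdef]
      field_simp
    have hmem : ∃ (f0 : H) (_ : f0 ∈ V.domain) (hf0W : f0 ∈ W.domain),
        W ⟨f0, hf0W⟩ = (gd : H) := by
      refine ⟨c • f, V.domain.smul_mem c hfV, W.domain.smul_mem c hfW, ?_⟩
      have h1 : (⟨c • f, W.domain.smul_mem c hfW⟩ : W.domain) = c • (⟨f, hfW⟩ : W.domain) :=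
        Subtype.ext rfl
      rw [h1, W.map_smul]
      rfl
    have hWgd : W gd = c • W wf := W.map_smul c wf
    refine le_iSup_of_le ⟨gd, hmem, hgdnorm⟩ (le_of_eq ?_)
    have hnorm : ‖⟪h, W gd⟫‖ = t⁻¹ * ‖⟪h, V ⟨f, hfV⟩⟫‖ := by
      rw [hWgd, inner_smul_right, norm_mul, hVeq, hcdef]
      simp [abs_of_pos ht]
    simp only [hnorm, hre]
    rw [mul_pow, ← ENNReal.ofReal_div_of_pos (by positivity)]
    congr 1
    field_simp
  · refine iSup_le fun g => ?_
    obtain ⟨⟨g, hgW⟩, ⟨f, hfV, hfW, hWf⟩, hg1⟩ := g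
    have hfVhat : f ∈ Vhat.domain := hext.1 hfV
    obtain ⟨hfW', hWfW⟩ := (hsq.1 f).mp hfVhat
    have hVeq : V ⟨f, hfV⟩ = W ⟨g, hgW⟩ := by
      rw [hext.2 (y := ⟨f, hfVhat⟩) rfl, hsq.2 f hfVhat hfW' hWfW]
      congr 1
      exact Subtype.ext hWf
    have hre : (⟪f, V ⟨f, hfV⟩⟫).re = 1 := by
      have : ⟪f, V ⟨f, hfV⟩⟫ = ⟪g, g⟫ := by
        rw [hVeq, ← hWsymm ⟨f, hfW⟩ ⟨g, hgW⟩]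
        have : W (⟨f, hfW⟩ : W.domain) = g := hWf
        rw [this]
      rw [this, inner_self_eq_norm_sq_to_K, hg1]
      simp
    have hVfne : V ⟨f, hfV⟩ ≠ 0 := by
      intro h0
      rw [h0] at hre
      simp [inner_zero_right] at hre
    refine le_iSup_of_le ⟨⟨f, hfV⟩, hVfne⟩ (le_of_eq ?_)
    rw [hre, hVeq]
    simp
end
end

section
/- Let V be a non-negative closed densely defined symmetric operator on a complex Hilbert space H, and let W_K be a non-negative selfadjoint operator such that W_K∘W_K is a non-negative selfadjoint extension of V, D(W_K) = { h ∈ H : sup{ |⟨h, Vf⟩|²/⟨f, Vf⟩ : f ∈ D(V), Vf ≠ 0 } < ∞ }, and ‖W_K h‖² equals this supremum for every h ∈ D(W_K) (i.e., W_K = V_K^{1/2}, the square root of the Kreĭn–von Neumann extension of V, by the Ando–Nishio characterization). Then ran(W_K↾_{D(V)}) = {W_K f : f ∈ D(V)} is dense in the closure of ran(W_K). -/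
noncomputable section

open Complex

variable {H : Type*} [NormedAddCommGroup H] [InnerProductSpace ℂ H] [CompleteSpace H]

local notation "⟪" x ", " y "⟫" => @inner ℂ _ _ x y

/-- `W` is the square root of the Kreĭn–von Neumann extension of `V` (Ando–Nishio
characterization): `W` is a non-negative selfadjoint operator, `W ∘ W` is a non-negative
selfadjoint extension of `V`, the domain of `W` consists exactly of those `h` with
`anSup V h < ∞`, and `‖W h‖² = anSup V h` there. -/
def IsKreinSqrt (V W : H →ₗ.[ℂ] H) : Prop :=
  IsSelfAdjoint W ∧ NonnegP W ∧
    (∃ T : H →ₗ.[ℂ] H, IsSqrtOf W T ∧ IsSelfAdjoint T ∧ NonnegP T ∧ V ≤ T) ∧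
    (∀ h : H, h ∈ W.domain ↔ anSup V h < ⊤) ∧
    ∀ (h : H) (hh : h ∈ W.domain), ENNReal.ofReal (‖W ⟨h, hh⟩‖ ^ 2) = anSup V h

/-!
For `g ∈ D(W)` let `u` be the orthogonal projection of `W g` onto the closure `K` of `W (D(V))`.
Since `W ∘ W ⊇ V` and `W` is symmetric, `⟪g, V f⟫ = ⟪W g, W f⟫ = ⟪u, W f⟫` and
`⟪f, V f⟫ = ‖W f‖²` for `f ∈ D(V)`, so Cauchy–Schwarz bounds every Ando–Nishio quotient of `g`
by `‖u‖²`. Hence `‖W g‖ ≤ ‖u‖`, which forces `W g = u ∈ K`.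
-/

theorem IsSelfAdjoint.isFormalAdjoint {A : H →ₗ.[ℂ] H} (hA : IsSelfAdjoint A) :
    A.IsFormalAdjoint A := by
  simpa only [LinearPMap.isSelfAdjoint_def.mp hA] using
    LinearPMap.adjoint_isFormalAdjoint hA.dense_domain

section

variable {E : Type*} [NormedAddCommGroup E] [InnerProductSpace ℂ E] {V W T : E →ₗ.[ℂ] E}

theorem anSup_le_ofReal {h : E} {c : ℝ} (hc : 0 ≤ c)
    (hbound : ∀ f : V.domain, ‖⟪h, V f⟫‖ ^ 2 ≤ c * (⟪(f : E), V f⟫).re) :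
    anSup V h ≤ ENNReal.ofReal c :=
  iSup_le fun f => ENNReal.div_le_of_le_mul <| by
    rw [← ENNReal.ofReal_mul hc]
    exact ENNReal.ofReal_le_ofReal (hbound f.1)

namespace IsSqrtOf

theorem domain_le (h : IsSqrtOf W T) : T.domain ≤ W.domain :=
  fun x hx => ((h.1 x).1 hx).1

theorem inner_apply_eq_of_le (hW : W.IsFormalAdjoint W) (h : IsSqrtOf W T) (hVT : V ≤ T)
    (f : V.domain) (g : W.domain) :
    ⟪(g : E), V f⟫ = ⟪W g, W ⟨f, h.domain_le (hVT.1 f.2)⟩⟫ := by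
  obtain ⟨hfW, hWf⟩ := (h.1 f).1 (hVT.1 f.2)
  rw [hVT.2 (y := ⟨f, hVT.1 f.2⟩) rfl, h.2 f _ hfW hWf]
  exact (hW g ⟨_, hWf⟩).symm

theorem re_inner_apply_eq_norm_sq (hW : W.IsFormalAdjoint W) (h : IsSqrtOf W T) (hVT : V ≤ T)
    (f : V.domain) :
    (⟪(f : E), V f⟫).re = ‖W ⟨f, h.domain_le (hVT.1 f.2)⟩‖ ^ 2 := by
  rw [h.inner_apply_eq_of_le hW hVT f ⟨f, _⟩, inner_self_eq_norm_sq_to_K]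
  norm_cast

theorem apply_mem_topologicalClosure [CompleteSpace E] (hW : W.IsFormalAdjoint W)
    (h : IsSqrtOf W T) (hVT : V ≤ T)
    (hnorm : ∀ g : W.domain, ENNReal.ofReal (‖W g‖ ^ 2) ≤ anSup V g) (g : W.domain) :
    W g ∈ ((V.domain.comap W.domain.subtype).map W.toFun).topologicalClosure := by
  set K := ((V.domain.comap W.domain.subtype).map W.toFun).topologicalClosure
  set u := K.starProjection (W g)
  have hbound : anSup V g ≤ ENNReal.ofReal (‖u‖ ^ 2) := by
    refine anSup_le_ofReal (sq_nonneg _) fun f => ?_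
    set Wf := W ⟨f, h.domain_le (hVT.1 f.2)⟩
    have hWf : Wf ∈ K := Submodule.le_topologicalClosure _ ⟨⟨f, _⟩, f.2, rfl⟩
    have hinner : ⟪(g : E), V f⟫ = ⟪u, Wf⟫ := by
      rw [h.inner_apply_eq_of_le hW hVT, K.inner_starProjection_left_eq_right,
        K.starProjection_eq_self_iff.2 hWf]
    calc ‖⟪(g : E), V f⟫‖ ^ 2 = ‖⟪u, Wf⟫‖ ^ 2 := by rw [hinner]
      _ ≤ (‖u‖ * ‖Wf‖) ^ 2 := by gcongr; exact norm_inner_le_norm _ _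
      _ = ‖u‖ ^ 2 * (⟪(f : E), V f⟫).re := by rw [h.re_inner_apply_eq_norm_sq hW hVT, mul_pow]
  have hle : ‖W g‖ ≤ ‖u‖ := by
    have := (ENNReal.ofReal_le_ofReal_iff (sq_nonneg _)).1 ((hnorm g).trans hbound)
    exact (pow_le_pow_iff_left₀ (norm_nonneg _) (norm_nonneg _) two_ne_zero).1 this
  exact (K.mem_iff_norm_starProjection _).2 (le_antisymm (K.norm_starProjection_apply_le _) hle)

end IsSqrtOf

end

theorem statement5_general
    (V WK : H →ₗ.[ℂ] H)
    (hWK : IsKreinSqrt V WK) :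
    closure {y : H | ∃ (f : H) (_ : f ∈ V.domain) (hfW : f ∈ WK.domain), WK ⟨f, hfW⟩ = y}
      = closure (Set.range fun g : WK.domain => WK g) := by
  obtain ⟨hsa, -, ⟨T, hsqrt, -, -, hVT⟩, -, hnorm⟩ := hWK
  have hM : ((V.domain.comap WK.domain.subtype).map WK.toFun : Set H)
      = {y : H | ∃ (f : H) (_ : f ∈ V.domain) (hfW : f ∈ WK.domain), WK ⟨f, hfW⟩ = y} := by
    ext y
    simp
  refine (closure_mono ?_).antisymm (closure_minimal ?_ isClosed_closure)
  · rintro _ ⟨f, -, hfW, rfl⟩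
    exact ⟨⟨f, hfW⟩, rfl⟩
  · rintro _ ⟨g, rfl⟩
    rw [← hM, ← Submodule.topologicalClosure_coe]
    exact hsqrt.apply_mem_topologicalClosure
      hsa.isFormalAdjoint hVT (fun g => (hnorm g g.2).le) g

/-- For a non-negative closed densely defined symmetric operator `V`, the
range of `V_K^{1/2}` restricted to `D(V)` is dense in the closure of `ran (V_K^{1/2})`. -/
theorem statement5
    (V WK : H →ₗ.[ℂ] H)
    (hVdense : Dense (V.domain : Set H)) (hVclosed : V.IsClosed)
    (hVsymm : IsSymmetricP V) (hVnn : NonnegP V)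
    (hWK : IsKreinSqrt V WK) :
    closure {y : H | ∃ (f : H) (_ : f ∈ V.domain) (hfW : f ∈ WK.domain), WK ⟨f, hfW⟩ = y}
      = closure (Set.range fun g : WK.domain => WK g) :=
  statement5_general V WK hWK
end
end

section
/- Let V be a non-negative closed densely defined symmetric operator on a complex Hilbert space H. Let W_F be a non-negative selfadjoint operator such that W_F∘W_F is a non-negative selfadjoint extension of V and D(V) is a core for W_F (i.e., W_F = V_F^{1/2}), and let W_K be a non-negative selfadjoint operator such that W_K∘W_K is a non-negative selfadjoint extension of V, D(W_K) = { h ∈ H : sup_{f ∈ D(V), Vf ≠ 0} |⟨h, Vf⟩|²/⟨f, Vf⟩ < ∞ }, and ‖W_K h‖² equals this supremum for all h ∈ D(W_K) (i.e., W_K = V_K^{1/2}). Then: (1) D(W_F) ⊆ D(W_K) and ‖W_K h‖ = ‖W_F h‖ for every h ∈ D(W_F); (2) there exists a bounded linear operator U on H with ‖U‖ ≤ 1 such that U(W_F h) = W_K h for all h ∈ D(W_F), ‖Ux‖ = ‖x‖ for all x in the closure of ran(W_F), Ux = 0 for all x orthogonal to ran(W_F), and ran(U) is contained in the closure of ran(W_K).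 -/
/-!
Let `W = V_F^{1/2}`, so that `V ≤ W²`. For `h ∈ D(W)` and `f ∈ D(V)` the Ando–Nishio quotient
`|⟪h, V f⟫|² / ⟪f, V f⟫` equals `|⟪W h, W f⟫|² / ‖W f‖²`. By Cauchy–Schwarz it is at most
`‖W h‖²`, and since `D(V)` is a core for `W` the vectors `W f` accumulate at `W h`, where the
quotient tends to `‖W h‖²`. Hence the supremum is `‖W h‖² < ∞`, so `h ∈ D(V_K^{1/2})` with
`‖V_K^{1/2} h‖ = ‖W h‖`. Then `W h ↦ V_K^{1/2} h` is a well-defined isometry on `ran W`; it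
extends by continuity to the closure and by `0` to the orthogonal complement.
-/

noncomputable section

open Complex

variable {H : Type*} [NormedAddCommGroup H] [InnerProductSpace ℂ H] [CompleteSpace H]

local notation "⟪" x ", " y "⟫" => @inner ℂ _ _ x y

/-- `W` is the square root of the Friedrichs extension of `V`: `W` is a non-negative
selfadjoint operator, `W ∘ W` is a non-negative selfadjoint extension of `V`, and `D(V)` is a
core for `W`. -/
def IsFriedrichsSqrt (V W : H →ₗ.[ℂ] H) : Prop :=
  IsSelfAdjoint W ∧ NonnegP W ∧
    (∃ T : H →ₗ.[ℂ] H, IsSqrtOf W T ∧ IsSelfAdjoint T ∧ NonnegP T ∧ V ≤ T) ∧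
    (W.domRestrict V.domain).closure = W

section General

variable {𝕜 E : Type*} [RCLike 𝕜] [NormedAddCommGroup E] [InnerProductSpace 𝕜 E]

theorem IsSelfAdjoint.isFormalAdjoint_self [CompleteSpace E] {A : E →ₗ.[𝕜] E}
    (hA : IsSelfAdjoint A) : A.IsFormalAdjoint A := by
  have h := LinearPMap.adjoint_isFormalAdjoint hA.dense_domain
  rwa [LinearPMap.isSelfAdjoint_def.mp hA] at h

theorem norm_inner_sq_div_norm_sq_le (x y : E) : ‖inner 𝕜 x y‖ ^ 2 / ‖y‖ ^ 2 ≤ ‖x‖ ^ 2 := by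
  rcases eq_or_ne y 0 with rfl | hy
  · simp
  rw [div_le_iff₀ (by positivity), ← mul_pow]
  exact pow_le_pow_left₀ (norm_nonneg _) (norm_inner_le_norm x y) 2

theorem ofReal_norm_sq_le_of_mem_closure {S : Set E} {x : E} (hx : x ∈ closure S)
    {c : ENNReal} (hc : ∀ y ∈ S, ENNReal.ofReal (‖inner 𝕜 x y‖ ^ 2 / ‖y‖ ^ 2) ≤ c) :
    ENNReal.ofReal (‖x‖ ^ 2) ≤ c := by
  rcases eq_or_ne x 0 with rfl | hx0
  · simp
  have hcont : ContinuousAt (fun y => ENNReal.ofReal (‖inner 𝕜 x y‖ ^ 2 / ‖y‖ ^ 2)) x :=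
    ENNReal.continuous_ofReal.continuousAt.comp <|
      ContinuousAt.div (by fun_prop) (by fun_prop) (by simpa using hx0)
  have hval : ‖inner 𝕜 x x‖ ^ 2 / ‖x‖ ^ 2 = ‖x‖ ^ 2 := by
    rw [inner_self_eq_norm_sq_to_K, ← RCLike.ofReal_pow, RCLike.norm_ofReal,
      abs_of_nonneg (by positivity)]
    field_simp
  have hmem := mem_closure_image hcont hx
  rw [hval] at hmem
  exact closure_minimal (Set.image_subset_iff.mpr hc) isClosed_Iic hmem

theorem Submodule.dense_sup_orthogonal [CompleteSpace E] (K : Submodule 𝕜 E) :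
    Dense ((K ⊔ Kᗮ : Submodule 𝕜 E) : Set E) := by
  rw [Submodule.dense_iff_topologicalClosure_eq_top, Submodule.topologicalClosure_eq_top_iff,
    ← Submodule.inf_orthogonal]
  exact Kᗮ.inf_orthogonal_eq_bot

theorem exists_partialIsometry_of_norm_eq [CompleteSpace E] {F M : Type*} [NormedAddCommGroup F]
    [NormedSpace 𝕜 F] [CompleteSpace F] [AddCommGroup M] [Module 𝕜 M] (A : M →ₗ[𝕜] E)
    (B : M →ₗ[𝕜] F) (hAB : ∀ z, ‖B z‖ = ‖A z‖) :
    ∃ U : E →L[𝕜] F, ‖U‖ ≤ 1 ∧ (∀ z, U (A z) = B z) ∧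
      (∀ x ∈ closure (Set.range A), ‖U x‖ = ‖x‖) ∧
      (∀ x, (∀ z, inner 𝕜 (A z) x = 0) → U x = 0) ∧ ∀ x, U x ∈ closure (Set.range B) := by
  set K := LinearMap.range A
  -- `U` is obtained by extending `(z, w) ↦ B z` along the map `(z, w) ↦ A z + w`, `w ∈ Kᗮ`,
  -- whose range `K ⊔ Kᗮ` is dense.
  set e : M × Kᗮ →ₗ[𝕜] E := A.coprod Kᗮ.subtype
  set f : M × Kᗮ →ₗ[𝕜] F := B ∘ₗ LinearMap.fst 𝕜 M Kᗮ
  have he : DenseRange e := by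
    have hrange : LinearMap.range e = K ⊔ Kᗮ := by
      rw [LinearMap.range_coprod, Submodule.range_subtype]
    rw [DenseRange, ← LinearMap.coe_range, hrange]
    exact K.dense_sup_orthogonal
  have hfe : ∀ p, ‖f p‖ ≤ 1 * ‖e p‖ := by
    rintro ⟨z, w⟩
    have hperp : inner 𝕜 (A z) (w : E) = 0 := K.inner_right_of_mem_orthogonal ⟨z, rfl⟩ w.2
    have hpyth := norm_add_sq_eq_norm_sq_add_norm_sq_of_inner_eq_zero _ _ hperp
    simp only [f, e, LinearMap.coe_comp, Function.comp_apply, LinearMap.fst_apply,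
      LinearMap.coprod_apply, Submodule.coe_subtype, one_mul, hAB]
    refine (mul_self_le_mul_self_iff (norm_nonneg _) (norm_nonneg _)).mpr ?_
    rw [hpyth]
    exact le_add_of_nonneg_right (mul_self_nonneg _)
  set U := f.extendOfNorm e
  have hUe : ∀ p, U (e p) = f p := LinearMap.extendOfNorm_eq he ⟨1, hfe⟩
  have hUA : ∀ z, U (A z) = B z := fun z => by simpa [e, f] using hUe (z, 0)
  refine ⟨U, LinearMap.opNorm_extendOfNorm_le he zero_le_one hfe, hUA, ?_, ?_, ?_⟩
  · have hiso : Set.range A ⊆ {x | ‖U x‖ = ‖x‖} := by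
      rintro _ ⟨z, rfl⟩
      simp [hUA, hAB]
    exact closure_minimal hiso (isClosed_eq (by fun_prop) (by fun_prop))
  · intro x hx
    have hxK : x ∈ Kᗮ := (K.mem_orthogonal x).2 fun _ ⟨z, hz⟩ => hz ▸ hx z
    simpa [e, f] using hUe (0, ⟨x, hxK⟩)
  · intro x
    refine he.induction_on x (isClosed_closure.preimage U.continuous) fun p => ?_
    rw [hUe]
    exact subset_closure ⟨p.1, rfl⟩

end General

theorem LinearPMap.apply_mem_closure_range_of_closure_eq {R E F : Type*} [CommRing R]
    [TopologicalSpace R] [AddCommGroup E] [Module R E] [TopologicalSpace E] [ContinuousAdd E]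
    [ContinuousSMul R E] [AddCommGroup F] [Module R F] [TopologicalSpace F] [ContinuousAdd F]
    [ContinuousSMul R F] {f g : E →ₗ.[R] F} (h : f.closure = g) (x : g.domain) :
    g x ∈ _root_.closure (Set.range f) := by
  have hgraph : (g.graph : Set (E × F)) ⊆ _root_.closure f.graph := by
    subst h
    by_cases hf : f.IsClosable
    · rw [← hf.graph_closure_eq_closure_graph, Submodule.topologicalClosure_coe]
    · rw [LinearPMap.closure_def' hf]
      exact subset_closure
  have hsnd : Prod.snd '' (f.graph : Set (E × F)) ⊆ Set.range f :=
    fun _ ⟨p, hp, hy⟩ => LinearPMap.mem_range_iff.mpr ⟨p.1, hy ▸ hp⟩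
  exact closure_mono hsnd <|
    image_closure_subset_closure_image continuous_snd ⟨_, hgraph (g.mem_graph x), rfl⟩

omit [CompleteSpace H] in
theorem anSup_eq_iSup (V : H →ₗ.[ℂ] H) (h : H) :
    anSup V h = ⨆ f : V.domain,
      ENNReal.ofReal (‖⟪h, V f⟫‖ ^ 2) / ENNReal.ofReal ((⟪(f : H), V f⟫).re) := by
  refine le_antisymm (iSup_le fun f => le_iSup_of_le f.1 le_rfl) (iSup_le fun f => ?_)
  by_cases hf : V f = 0
  · simp [hf]
  · exact le_iSup_of_le ⟨f, hf⟩ le_rfl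

namespace IsSqrtOf

variable {V W T : H →ₗ.[ℂ] H}

omit [CompleteSpace H] in
theorem mem_domain_of_le (hWT : IsSqrtOf W T) (hVT : V ≤ T) (f : V.domain) :
    (f : H) ∈ W.domain :=
  ((hWT.1 f).mp (hVT.1 f.2)).1

omit [CompleteSpace H] in
theorem exists_apply_eq_of_le (hWT : IsSqrtOf W T) (hVT : V ≤ T) (f : V.domain)
    (hf : (f : H) ∈ W.domain) : ∃ hWf : W ⟨f, hf⟩ ∈ W.domain, V f = W ⟨W ⟨f, hf⟩, hWf⟩ := by
  have hfT := hVT.1 f.2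
  obtain ⟨_, hWf⟩ := (hWT.1 f).mp hfT
  exact ⟨hWf, (hVT.2 rfl).trans (hWT.2 f hfT hf hWf)⟩

theorem anSup_term_eq (hW : IsSelfAdjoint W) (hWT : IsSqrtOf W T) (hVT : V ≤ T) (h : W.domain)
    (f : V.domain) (hf : (f : H) ∈ W.domain) :
    ENNReal.ofReal (‖⟪(h : H), V f⟫‖ ^ 2) / ENNReal.ofReal ((⟪(f : H), V f⟫).re) =
      ENNReal.ofReal (‖⟪W h, W ⟨f, hf⟩⟫‖ ^ 2 / ‖W ⟨f, hf⟩‖ ^ 2) := by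
  obtain ⟨hWf, hVf⟩ := hWT.exists_apply_eq_of_le hVT f hf
  have hsymm := hW.isFormalAdjoint_self
  have hnum : ⟪(h : H), V f⟫ = ⟪W h, W ⟨f, hf⟩⟫ := by
    rw [hVf]
    exact (hsymm h ⟨_, hWf⟩).symm
  have hden : (⟪(f : H), V f⟫).re = ‖W ⟨f, hf⟩‖ ^ 2 := by
    rw [hVf, ← hsymm ⟨f, hf⟩ ⟨_, hWf⟩]
    exact inner_self_eq_norm_sq (𝕜 := ℂ) _
  rw [hnum, hden]
  rcases eq_or_ne (W ⟨f, hf⟩) 0 with h0 | h0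
  · simp [h0]
  · exact (ENNReal.ofReal_div_of_pos (by positivity)).symm

theorem anSup_eq_of_core (hW : IsSelfAdjoint W) (hWT : IsSqrtOf W T) (hVT : V ≤ T)
    (hcore : (W.domRestrict V.domain).closure = W) (h : W.domain) :
    anSup V h = ENNReal.ofReal (‖W h‖ ^ 2) := by
  rw [anSup_eq_iSup]
  refine le_antisymm (iSup_le fun f => ?_) ?_
  · rw [hWT.anSup_term_eq hW hVT h f (hWT.mem_domain_of_le hVT f)]
    exact ENNReal.ofReal_le_ofReal (norm_inner_sq_div_norm_sq_le (𝕜 := ℂ) _ _)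
  · refine ofReal_norm_sq_le_of_mem_closure (𝕜 := ℂ)
      (LinearPMap.apply_mem_closure_range_of_closure_eq hcore h) ?_
    rintro _ ⟨g, rfl⟩
    have hg : W.domRestrict V.domain g = W ⟨g, g.2.2⟩ := LinearPMap.domRestrict_apply rfl
    rw [hg, ← hWT.anSup_term_eq hW hVT h ⟨g, g.2.1⟩ g.2.2]
    exact le_iSup_of_le (⟨g, g.2.1⟩ : V.domain) le_rfl

end IsSqrtOf

theorem statement6_general
    (V WF WK : H →ₗ.[ℂ] H)
    (hWF : IsFriedrichsSqrt V WF) (hWK : IsKreinSqrt V WK) :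
    (WF.domain ≤ WK.domain ∧
      ∀ (h : H) (hF : h ∈ WF.domain) (hK : h ∈ WK.domain),
        ‖WK ⟨h, hK⟩‖ = ‖WF ⟨h, hF⟩‖) ∧
    ∃ U : H →L[ℂ] H, ‖U‖ ≤ 1 ∧
      (∀ (h : H) (hF : h ∈ WF.domain) (hK : h ∈ WK.domain),
        U (WF ⟨h, hF⟩) = WK ⟨h, hK⟩) ∧
      (∀ x ∈ closure (Set.range fun g : WF.domain => WF g), ‖U x‖ = ‖x‖) ∧
      (∀ x : H, (∀ g : WF.domain, ⟪WF g, x⟫ = 0) → U x = 0) ∧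
      ∀ x : H, U x ∈ closure (Set.range fun g : WK.domain => WK g) := by
  obtain ⟨hWFsa, -, ⟨T, hWFT, -, -, hVT⟩, hcore⟩ := hWF
  obtain ⟨-, -, -, hdomK, hnormK⟩ := hWK
  have hanSup (g : WF.domain) := hWFT.anSup_eq_of_core hWFsa hVT hcore g
  have hle : WF.domain ≤ WK.domain := fun h hF =>
    (hdomK h).2 (hanSup ⟨h, hF⟩ ▸ ENNReal.ofReal_lt_top)
  have hnorm (h : H) (hF : h ∈ WF.domain) (hK : h ∈ WK.domain) :
      ‖WK ⟨h, hK⟩‖ = ‖WF ⟨h, hF⟩‖ := by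
    have hsq := (hnormK h hK).trans (hanSup ⟨h, hF⟩)
    rw [ENNReal.ofReal_eq_ofReal_iff (by positivity) (by positivity)] at hsq
    exact (pow_left_inj₀ (norm_nonneg _) (norm_nonneg _) two_ne_zero).mp hsq
  obtain ⟨U, hU1, hUW, hUiso, hUperp, hUrange⟩ := exists_partialIsometry_of_norm_eq WF.toFun
    (WK.toFun ∘ₗ Submodule.inclusion hle) fun g => hnorm g g.2 (hle g.2)
  refine ⟨⟨hle, hnorm⟩, U, hU1, fun h hF _ => hUW ⟨h, hF⟩, hUiso, hUperp, fun x => ?_⟩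
  refine closure_mono ?_ (hUrange x)
  rintro _ ⟨g, rfl⟩
  exact ⟨_, rfl⟩

/-- `D(V_F^{1/2}) ⊆ D(V_K^{1/2})` with `‖V_K^{1/2} h‖ = ‖V_F^{1/2} h‖`
there, and there is a partial isometry `U` with `U V_F^{1/2} h = V_K^{1/2} h`, isometric on
the closure of `ran V_F^{1/2}`, vanishing on its orthogonal complement, with range inside the
closure of `ran V_K^{1/2}`. -/
theorem statement6
    (V WF WK : H →ₗ.[ℂ] H)
    (hVdense : Dense (V.domain : Set H)) (hVclosed : V.IsClosed)
    (hVsymm : IsSymmetricP V) (hVnn : NonnegP V)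
    (hWF : IsFriedrichsSqrt V WF) (hWK : IsKreinSqrt V WK) :
    (WF.domain ≤ WK.domain ∧
      ∀ (h : H) (hF : h ∈ WF.domain) (hK : h ∈ WK.domain),
        ‖WK ⟨h, hK⟩‖ = ‖WF ⟨h, hF⟩‖) ∧
    ∃ U : H →L[ℂ] H, ‖U‖ ≤ 1 ∧
      (∀ (h : H) (hF : h ∈ WF.domain) (hK : h ∈ WK.domain),
        U (WF ⟨h, hF⟩) = WK ⟨h, hK⟩) ∧
      (∀ x ∈ closure (Set.range fun g : WF.domain => WF g), ‖U x‖ = ‖x‖) ∧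
      (∀ x : H, (∀ g : WF.domain, ⟪WF g, x⟫ = 0) → U x = 0) ∧
      ∀ x : H, U x ∈ closure (Set.range fun g : WK.domain => WK g) :=
  statement6_general V WF WK hWF hWK
end
end

section
/- Let (A, Ã) be a dual pair of closed densely defined operators on a complex Hilbert space H with the common core property (common core D), with A dissipative, and let V := ((A − Ã)/(2i))↾_D be its imaginary part. Let W_F = V_F^{1/2} and W_K = V_K^{1/2} be the square roots of the Friedrichs and Kreĭn–von Neumann extensions of V. Let 𝒱 ⊆ D(Ã*) with 𝒱 ∩ D(A) = {0} and L : 𝒱 → H linear, and assume Lv ∈ ran(W_F) for every v ∈ 𝒱. If the extension A_{𝒱,L} (domain D(A) ∔ 𝒱, acting as f + v ↦ Ã*(f+v) + Lv) is dissipative, then 𝒱 ⊆ D(W_K). -/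
noncomputable section

open Complex

variable {H : Type*} [NormedAddCommGroup H] [InnerProductSpace ℂ H] [CompleteSpace H]

local notation "⟪" x ", " y "⟫" => @inner ℂ _ _ x y

/-! For `v ∈ 𝓥` pick `g` with `W_F g = L v`. For `f ∈ D(V)` and `t ∈ ℂ`, dissipativity of
`A_{𝓥,L}` at `t f + v` reads
`0 ≤ |t|² ‖W_F f‖² + 2 Re (t ⟪v, V f⟫) + Im (t̄ ⟪W_F f, g⟫) + Im ⟪v, Ã* v + L v⟫`,
because `Im ⟪f, A f⟫ = ⟪f, V f⟫ = ‖W_F f‖²`. Bounding the third term by AM–GM and choosing the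
phase of `t` leaves a nonnegative real quadratic in `|t|`, whose discriminant gives
`|⟪v, V f⟫|² ≤ C ⟪f, V f⟫` with `C` independent of `f`. By the Ando–Nishio description of
`D(W_K)` this says `v ∈ D(W_K)`. -/

open scoped ComplexConjugate

theorem Complex.norm_sq_le_mul_of_quadratic_nonneg {c k : ℝ} {b : ℂ}
    (h : ∀ t : ℂ, 0 ≤ c * ‖t‖ ^ 2 + 2 * (t * b).re + k) : ‖b‖ ^ 2 ≤ c * k := by
  set u : ℂ := -exp (-(arg b : ℂ) * I)
  have hu : ‖u‖ = 1 := by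
    rw [norm_neg, ← ofReal_neg, Complex.norm_exp_ofReal_mul_I]
  have hub : u * b = -‖b‖ := by
    conv_lhs => rw [← norm_mul_exp_arg_mul_I b]
    rw [neg_mul, mul_left_comm, ← exp_add]
    simp
  have hquad : ∀ s : ℝ, 0 ≤ c * (s * s) + (-2 * ‖b‖) * s + k := by
    intro s
    have hs := h (s * u)
    rw [norm_mul, hu, mul_assoc, hub, Complex.norm_real, Real.norm_eq_abs] at hs
    simp only [mul_one, sq_abs, mul_neg, neg_re, re_ofReal_mul, ofReal_re] at hs
    linarith
  have := discrim_le_zero hquad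
  rw [discrim] at this
  nlinarith

theorem Complex.norm_sq_le_of_quadratic_add_im_nonneg {w G K : ℝ} {b l : ℂ} (hl : ‖l‖ ≤ w * G)
    (h : ∀ t : ℂ, 0 ≤ ‖t‖ ^ 2 * w ^ 2 + 2 * (t * b).re + (conj t * l).im + K) :
    ‖b‖ ^ 2 ≤ (2 * K + G ^ 2 / 2) * w ^ 2 := by
  have hquad : ∀ t : ℂ, 0 ≤ 2 * w ^ 2 * ‖t‖ ^ 2 + 2 * (t * b).re + (K + G ^ 2 / 4) := by
    intro t
    have hlt : (conj t * l).im ≤ ‖t‖ * (w * G) :=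
      calc (conj t * l).im ≤ ‖conj t * l‖ := im_le_norm _
        _ = ‖t‖ * ‖l‖ := by rw [norm_mul, RCLike.norm_conj]
        _ ≤ ‖t‖ * (w * G) := mul_le_mul_of_nonneg_left hl (norm_nonneg t)
    nlinarith [h t, sq_nonneg (‖t‖ * w - G / 2)]
  linarith [norm_sq_le_mul_of_quadratic_nonneg hquad]

section

variable {E : Type*} [NormedAddCommGroup E] [InnerProductSpace ℂ E]

theorem re_inner_smul_sub_of_inner_eq {f a a' : E} (h : ⟪f, a'⟫ = ⟪a, f⟫) :
    (⟪f, (2 * I)⁻¹ • (a - a')⟫).re = (⟪f, a⟫).im := by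
  rw [inner_smul_right, inner_sub_right, h, ← inner_conj_symm a f, Complex.sub_conj]
  field_simp
  simp

theorem im_inner_smul_add_smul_add {f v a a' w ℓ : E} (hadj : ⟪f, w⟫ = ⟪a', v⟫) (t : ℂ) :
    (⟪t • f + v, t • a + w + ℓ⟫).im = ‖t‖ ^ 2 * (⟪f, a⟫).im
      + 2 * (t * ⟪v, (2 * I)⁻¹ • (a - a')⟫).re + (conj t * ⟪f, ℓ⟫).im + (⟪v, w + ℓ⟫).im := by
  have hw : ⟪f, w⟫ = conj ⟪v, a'⟫ := by rw [hadj, inner_conj_symm]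
  simp only [inner_add_left, inner_add_right, inner_smul_left, inner_smul_right, inner_sub_right,
    hw]
  rw [← Complex.normSq_eq_norm_sq, Complex.normSq_apply]
  simp only [Complex.add_im, Complex.add_re, Complex.mul_im, Complex.mul_re, Complex.conj_re,
    Complex.conj_im, Complex.sub_re, Complex.sub_im, Complex.inv_re, Complex.inv_im,
    Complex.I_re, Complex.I_im, Complex.normSq_apply]
  norm_num
  ring

theorem LinearPMap.apply_eq_smul_add_of_le {A B : E →ₗ.[ℂ] E} (hAB : A ≤ B) (t : ℂ)
    (f : A.domain) (v : B.domain) {x : E} (hx : x = t • (f : E) + v) (h : x ∈ B.domain) :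
    B ⟨x, h⟩ = t • A f + B v := by
  have : (⟨x, h⟩ : B.domain) = t • ⟨f, hAB.1 f.2⟩ + v := Subtype.ext hx
  rw [this, map_add, map_smul, ← hAB.2 (x := f) rfl]

theorem anSup_lt_top_of_le {V : E →ₗ.[ℂ] E} {h : E} {C : ℝ} (hC : 0 ≤ C)
    (hb : ∀ f : V.domain, ‖⟪h, V f⟫‖ ^ 2 ≤ C * (⟪(f : E), V f⟫).re) : anSup V h < ⊤ := by
  refine lt_of_le_of_lt (iSup_le fun f => ?_) (ENNReal.ofReal_lt_top (r := C))
  refine ENNReal.div_le_of_le_mul ?_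
  rw [← ENNReal.ofReal_mul hC]
  exact ENNReal.ofReal_le_ofReal (hb f.1)

variable [CompleteSpace E]

theorem IsSelfAdjoint.isFormalAdjoint_s8 {W : E →ₗ.[ℂ] E} (hW : IsSelfAdjoint W) :
    W.IsFormalAdjoint W := by
  have := W.adjoint_isFormalAdjoint hW.dense_domain
  rwa [show W.adjoint = W from hW] at this

theorem IsSelfAdjoint.norm_inner_apply_le {W : E →ₗ.[ℂ] E} (hW : IsSelfAdjoint W)
    (x y : W.domain) : ‖⟪(x : E), W y⟫‖ ≤ ‖W x‖ * ‖(y : E)‖ := by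
  rw [← hW.isFormalAdjoint_s8 x y]
  exact norm_inner_le_norm _ _

theorem IsSqrtOf.inner_apply_eq_norm_sq {W T : E →ₗ.[ℂ] E} (hW : IsSelfAdjoint W)
    (hWT : IsSqrtOf W T) (x : T.domain) :
    ∃ hx : (x : E) ∈ W.domain, ⟪(x : E), T x⟫ = ((‖W ⟨x, hx⟩‖ ^ 2 : ℝ) : ℂ) := by
  obtain ⟨hxW, hWx⟩ := (hWT.1 x).1 x.2
  refine ⟨hxW, ?_⟩
  rw [hWT.2 x x.2 hxW hWx, ← hW.isFormalAdjoint_s8 ⟨x, hxW⟩ ⟨_, hWx⟩, inner_self_eq_norm_sq_to_K]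
  norm_cast

theorem LinearPMap.isFormalAdjoint_of_le_adjoint {A At : E →ₗ.[ℂ] E}
    (hAt : Dense (At.domain : Set E)) (hdual : A ≤ At.adjoint) : A.IsFormalAdjoint At :=
  fun x y => by
    rw [hdual.2 (y := ⟨x, hdual.1 x.2⟩) rfl]
    exact At.adjoint_isFormalAdjoint hAt _ y

theorem re_inner_smul_sub_eq_im_inner {A At : E →ₗ.[ℂ] E} (hAt : Dense (At.domain : Set E))
    (hdual : A ≤ At.adjoint) (f : A.domain) (hf : (f : E) ∈ At.domain) :
    (⟪(f : E), (2 * I)⁻¹ • (A f - At ⟨f, hf⟩)⟫).re = (⟪(f : E), A f⟫).im :=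
  re_inner_smul_sub_of_inner_eq
    (LinearPMap.isFormalAdjoint_of_le_adjoint hAt hdual f ⟨f, hf⟩).symm

theorem im_inner_adjoint_smul_add {A At : E →ₗ.[ℂ] E} (hAt : Dense (At.domain : Set E))
    (hdual : A ≤ At.adjoint) (f : A.domain) (hf : (f : E) ∈ At.domain)
    (v : At.adjoint.domain) (ℓ : E) (t : ℂ) {x : E} (hx : x = t • (f : E) + v)
    (h : x ∈ At.adjoint.domain) :
    (⟪x, At.adjoint ⟨x, h⟩ + ℓ⟫).im = ‖t‖ ^ 2 * (⟪(f : E), A f⟫).im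
      + 2 * (t * ⟪(v : E), (2 * I)⁻¹ • (A f - At ⟨f, hf⟩)⟫).re + (conj t * ⟪(f : E), ℓ⟫).im
      + (⟪(v : E), At.adjoint v + ℓ⟫).im := by
  rw [LinearPMap.apply_eq_smul_add_of_le hdual t f v hx, hx]
  refine im_inner_smul_add_smul_add ?_ t
  rw [← inner_conj_symm, At.adjoint_isFormalAdjoint hAt v ⟨f, hf⟩, inner_conj_symm]

end

theorem statement8_general
    (A At V : H →ₗ.[ℂ] H) (D : Submodule ℂ H)
    (hAtdense : Dense (At.domain : Set H))
    (hdual : A ≤ At.adjoint)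
    (hDA : D ≤ A.domain) (hDAt : D ≤ At.domain)
    (hVdom : V.domain = D)
    (hV : ∀ (x : H) (hxV : x ∈ V.domain) (hxA : x ∈ A.domain) (hxAt : x ∈ At.domain),
      V ⟨x, hxV⟩ = (2 * Complex.I)⁻¹ • (A ⟨x, hxA⟩ - At ⟨x, hxAt⟩))
    (𝓥 : Submodule ℂ H) (h𝓥 : 𝓥 ≤ At.adjoint.domain)
    (L : 𝓥 →ₗ[ℂ] H)
    (WF WK : H →ₗ.[ℂ] H)
    (hWF : IsFriedrichsSqrt V WF) (hWK : IsKreinSqrt V WK)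
    (hL : ∀ v : 𝓥, ∃ (g : H) (hg : g ∈ WF.domain), WF ⟨g, hg⟩ = L v)
    (hdissext : (∀ (f : A.domain) (v : 𝓥) (hfv : (f : H) + (v : H) ∈ At.adjoint.domain),
      0 ≤ (⟪(f : H) + (v : H), At.adjoint ⟨(f : H) + (v : H), hfv⟩ + L v⟫).im)) :
    ∀ v : 𝓥, (v : H) ∈ WK.domain := by
  intro v
  obtain ⟨g, hg, hgL⟩ := hL v
  obtain ⟨hWFsa, -, ⟨T, hWT, -, -, hVT⟩, -⟩ := hWF
  set v' : At.adjoint.domain := ⟨v, h𝓥 v.2⟩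
  set K := (⟪(v : H), At.adjoint v' + L v⟫).im
  have hK : 0 ≤ K := by
    simpa [K, inner_add_right] using hdissext 0 v (by simpa using h𝓥 v.2)
  refine (hWK.2.2.2.1 v).2 (anSup_lt_top_of_le (C := 2 * K + ‖g‖ ^ 2 / 2) (by positivity)
    fun f => ?_)
  have hfD : (f : H) ∈ D := hVdom ▸ f.2
  set fA : A.domain := ⟨f, hDA hfD⟩
  have hfAt : (f : H) ∈ At.domain := hDAt hfD
  have hVf : V f = (2 * I)⁻¹ • (A fA - At ⟨f, hfAt⟩) := hV f f.2 fA.2 hfAt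
  obtain ⟨hfW, hq⟩ := hWT.inner_apply_eq_norm_sq hWFsa ⟨f, hVT.1 f.2⟩
  rw [← hVT.2 (x := f) rfl] at hq
  have him : (⟪(f : H), A fA⟫).im = ‖WF ⟨f, hfW⟩‖ ^ 2 := by
    rw [← re_inner_smul_sub_eq_im_inner hAtdense hdual fA hfAt, ← hVf, hq, ofReal_re]
  have hl : ‖⟪(f : H), L v⟫‖ ≤ ‖WF ⟨f, hfW⟩‖ * ‖g‖ :=
    hgL ▸ hWFsa.norm_inner_apply_le ⟨f, hfW⟩ ⟨g, hg⟩
  rw [hq, ofReal_re]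
  refine norm_sq_le_of_quadratic_add_im_nonneg hl fun t => ?_
  have hmem : ((t • fA : A.domain) : H) + v ∈ At.adjoint.domain :=
    add_mem (Submodule.smul_mem _ t (hdual.1 fA.2)) (h𝓥 v.2)
  have key := (hdissext (t • fA) v hmem).trans_eq
    (im_inner_adjoint_smul_add hAtdense hdual fA hfAt v' (L v) t rfl hmem)
  rwa [him, ← hVf] at key

/-- If `L v ∈ ran(V_F^{1/2})` for all `v ∈ 𝓥` and `A_{𝓥,L}` is
dissipative, then `𝓥 ⊆ D(V_K^{1/2})`. -/
theorem statement8
    (A At V : H →ₗ.[ℂ] H) (D : Submodule ℂ H)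
    (hAdense : Dense (A.domain : Set H)) (hAtdense : Dense (At.domain : Set H))
    (hAclosed : A.IsClosed) (hAtclosed : At.IsClosed)
    (hdual : A ≤ At.adjoint)
    (hDA : D ≤ A.domain) (hDAt : D ≤ At.domain)
    (hcoreA : (A.domRestrict D).closure = A)
    (hcoreAt : (At.domRestrict D).closure = At)
    (hdiss : Dissipative A)
    (hVdom : V.domain = D)
    (hV : ∀ (x : H) (hxV : x ∈ V.domain) (hxA : x ∈ A.domain) (hxAt : x ∈ At.domain),
      V ⟨x, hxV⟩ = (2 * Complex.I)⁻¹ • (A ⟨x, hxA⟩ - At ⟨x, hxAt⟩))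
    (𝓥 : Submodule ℂ H) (h𝓥 : 𝓥 ≤ At.adjoint.domain) (h𝓥A : 𝓥 ⊓ A.domain = ⊥)
    (L : 𝓥 →ₗ[ℂ] H)
    (WF WK : H →ₗ.[ℂ] H)
    (hWF : IsFriedrichsSqrt V WF) (hWK : IsKreinSqrt V WK)
    (hL : ∀ v : 𝓥, ∃ (g : H) (hg : g ∈ WF.domain), WF ⟨g, hg⟩ = L v)
    (hdissext : (∀ (f : A.domain) (v : 𝓥) (hfv : (f : H) + (v : H) ∈ At.adjoint.domain),
      0 ≤ (⟪(f : H) + (v : H), At.adjoint ⟨(f : H) + (v : H), hfv⟩ + L v⟫).im)) :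
    ∀ v : 𝓥, (v : H) ∈ WK.domain :=
  statement8_general A At V D hAtdense hdual hDA hDAt hVdom hV 𝓥 h𝓥 L WF WK hWF hWK hL hdissext
end
end

section
/- Let (A, Ã) be a dual pair of closed densely defined operators on a complex Hilbert space H with the common core property (common core D), with A dissipative, and let V := ((A − Ã)/(2i))↾_D be its imaginary part. Let W_F = V_F^{1/2} and W_K = V_K^{1/2} be the square roots of the Friedrichs and Kreĭn–von Neumann extensions of V, and write V_F = W_F∘W_F. Let 𝒱 ⊆ D(Ã*) with 𝒱 ∩ D(A) = {0} and L : 𝒱 → H linear, and assume that for every v ∈ 𝒱 there is φ_v ∈ D(V_F) with Lv = V_F φ_v. Then the extension A_{𝒱,L} (domain D(A) ∔ 𝒱, acting as f + v ↦ Ã*(f+v) + Lv) is dissipative if and only if 𝒱 ⊆ D(W_K) and for every v ∈ 𝒱: Im⟨v, Ã*v⟩ + Im⟨v, V_F φ_v⟩ ≥ (1/4)‖W_K(φ_v + 2iv)‖². -/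
noncomputable section

open Complex

variable {H : Type*} [NormedAddCommGroup H] [InnerProductSpace ℂ H] [CompleteSpace H]

local notation "⟪" x ", " y "⟫" => @inner ℂ _ _ x y

/-! On the common core `D = D(V)` one has, with `w = φ_v + 2 i v` and
`c_v = Im ⟪v, Ã* v⟫ + Im ⟪v, L v⟫`,
`Im ⟪x + v, A x + Ã* v + L v⟫ = ⟪x, V x⟫ + Re (i ⟪w, V x⟫) + c_v`,
and since the dissipativity condition is closed in the graph of `A` and `D` is a core, it suffices
to test it on `D`. Replacing `x` by `μ x` turns it into a quadratic inequality in `μ ∈ ℂ`, which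
holds iff `c_v ≥ 0` and `|⟪w, V x⟫|² ≤ 4 c_v ⟪x, V x⟫` for all `x`; that is, the Ando–Nishio
supremum at `w` is at most `4 c_v`, i.e. `w ∈ D(W_K)` and `‖W_K w‖² ≤ 4 c_v`. Finally
`φ_v ∈ D(V_F) ⊆ D(W_F) ⊆ D(W_K)`, so `w ∈ D(W_K)` iff `v ∈ D(W_K)`. -/

open ComplexConjugate

theorem ENNReal.ofReal_div_ofReal_le_ofReal_iff {x a b : ℝ} (ha : 0 ≤ a) (hb : 0 ≤ b) :
    ENNReal.ofReal x / ENNReal.ofReal a ≤ ENNReal.ofReal b ↔ x ≤ b * a := by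
  rw [ENNReal.div_le_iff_le_mul (Or.inr ENNReal.ofReal_ne_top) (Or.inl ENNReal.ofReal_ne_top),
    ← ENNReal.ofReal_mul hb, ENNReal.ofReal_le_ofReal_iff (mul_nonneg hb ha)]

theorem forall_sq_norm_mul_add_re_mul_add_nonneg_iff {a c : ℝ} (ha : 0 ≤ a) (z : ℂ) :
    (∀ μ : ℂ, 0 ≤ ‖μ‖ ^ 2 * a + (μ * z).re + c) ↔ 0 ≤ c ∧ ‖z‖ ^ 2 ≤ 4 * a * c := by
  constructor
  · intro h
    have hc : 0 ≤ c := by simpa using h 0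
    have hquad : ∀ t : ℝ, 0 ≤ (a * ‖z‖ ^ 2) * (t * t) + ‖z‖ ^ 2 * t + c := fun t => by
      have hμ := h (t * conj z)
      rw [mul_assoc, Complex.conj_mul', norm_mul, Complex.norm_real, Complex.norm_conj,
        Real.norm_eq_abs, mul_pow, sq_abs] at hμ
      norm_cast at hμ
      linarith
    have hdisc := discrim_le_zero hquad
    rw [discrim] at hdisc
    refine ⟨hc, ?_⟩
    rcases (sq_nonneg ‖z‖).eq_or_lt with hz | hz
    · rw [← hz]; positivity
    · nlinarith
  · rintro ⟨hc, hz⟩ μ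
    have hre : -(‖μ‖ * ‖z‖) ≤ (μ * z).re := by
      simpa [norm_mul] using neg_le_of_abs_le (Complex.abs_re_le_norm (μ * z))
    have hsq : (‖μ‖ * ‖z‖) ^ 2 ≤ 4 * (‖μ‖ ^ 2 * a) * c := by
      rw [mul_pow]; nlinarith [sq_nonneg ‖μ‖]
    nlinarith [sq_nonneg (‖μ‖ ^ 2 * a - c), mul_nonneg (norm_nonneg μ) (norm_nonneg z),
      mul_nonneg (sq_nonneg ‖μ‖) ha]

theorem LinearPMap.forall_mem_of_closure_domRestrict_eq {R E F : Type*} [CommRing R]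
    [AddCommGroup E] [Module R E] [TopologicalSpace E] [AddCommGroup F] [Module R F]
    [TopologicalSpace F] [ContinuousAdd E] [ContinuousAdd F]
    [TopologicalSpace R] [ContinuousSMul R E] [ContinuousSMul R F]
    {f : E →ₗ.[R] F} {D : Submodule R E} (hcore : (f.domRestrict D).closure = f)
    {S : Set (E × F)} (hS : _root_.IsClosed S)
    (hD : ∀ x : f.domain, (x : E) ∈ D → ((x : E), f x) ∈ S)
    (x : f.domain) : ((x : E), f x) ∈ S := by
  have hgraph : ((f.domRestrict D).graph : Set (E × F)) ⊆ S := by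
    intro p hp
    obtain ⟨y, rfl⟩ := (f.domRestrict D).mem_graph_iff'.mp hp
    convert hD ⟨y, y.2.2⟩ y.2.1 using 2
    exact LinearPMap.domRestrict_apply rfl
  have hclosure : (f.graph : Set (E × F)) ⊆ S := by
    rw [← hcore]
    by_cases hf : (f.domRestrict D).IsClosable
    · rw [← hf.graph_closure_eq_closure_graph, Submodule.topologicalClosure_coe]
      exact closure_minimal hgraph hS
    · rwa [LinearPMap.closure_def' hf]
  exact hclosure (f.mem_graph x)

theorem LinearPMap.apply_add_of_le {R E F : Type*} [Ring R] [AddCommGroup E] [Module R E]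
    [AddCommGroup F] [Module R F] {f g : E →ₗ.[R] F} (hfg : f ≤ g) (x : f.domain) (y : g.domain)
    (hxy : (x : E) + y ∈ g.domain) : g ⟨(x : E) + y, hxy⟩ = f x + g y := by
  have hsplit : (⟨(x : E) + y, hxy⟩ : g.domain) = ⟨x, hfg.1 x.2⟩ + y := rfl
  rw [hsplit, LinearPMap.map_add, ← hfg.2 (x := x) rfl]

theorem IsSelfAdjoint.inner_apply_left {W : H →ₗ.[ℂ] H} (hW : IsSelfAdjoint W) (x y : W.domain) :
    ⟪W x, (y : H)⟫ = ⟪(x : H), W y⟫ := by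
  have h := LinearPMap.adjoint_isFormalAdjoint hW.dense_domain
  rw [LinearPMap.isSelfAdjoint_def.mp hW] at h
  exact h x y

-- Read `a = A x`, `b = Ã x`, `s = V x`, `y = Ã* v`, `l = L v = V_F p`.
omit [CompleteSpace H] in
theorem im_inner_add_add_eq {x v a b s y l p : H}
    (ha : a = b + (2 * I) • s) (hxb : ⟪x, b⟫ = conj ⟪x, a⟫) (hvb : ⟪v, b⟫ = conj ⟪x, y⟫)
    (hxl : ⟪x, l⟫ = conj ⟪p, s⟫) :
    (⟪x + v, a + (y + l)⟫).im
      = (⟪x, s⟫).re + (I * ⟪p + (2 * I) • v, s⟫).re + ((⟪v, y⟫).im + (⟪v, l⟫).im) := by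
  have hxa : ⟪x, a⟫ = conj ⟪x, a⟫ + (2 * I) * ⟪x, s⟫ := by
    rw [← hxb, ← inner_smul_right, ← inner_add_right, ← ha]
  have hre := congrArg Complex.re hxa
  have him := congrArg Complex.im hxa
  nth_rw 1 [ha]
  simp only [inner_add_left, inner_add_right, inner_smul_left, inner_smul_right, hxb, hvb, hxl]
  simp only [Complex.add_re, Complex.add_im, Complex.mul_re, Complex.mul_im, Complex.conj_re,
    Complex.conj_im, Complex.I_re, Complex.I_im, map_mul, Complex.conj_I, Complex.conj_ofNat,
    Complex.re_ofNat, Complex.im_ofNat, Complex.neg_re, Complex.neg_im] at hre him ⊢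
  linarith

omit [CompleteSpace H] in
theorem anSup_le_ofReal_iff {V : H →ₗ.[ℂ] H} (hV : ∀ x : V.domain, 0 ≤ (⟪(x : H), V x⟫).re)
    (h : H) {r : ℝ} (hr : 0 ≤ r) :
    anSup V h ≤ ENNReal.ofReal r ↔ ∀ x : V.domain, ‖⟪h, V x⟫‖ ^ 2 ≤ r * (⟪(x : H), V x⟫).re := by
  rw [anSup, iSup_le_iff]
  simp only [ENNReal.ofReal_div_ofReal_le_ofReal_iff (hV _) hr]
  refine ⟨fun hle x => ?_, fun hle x => hle x.1⟩
  by_cases hx : V x = 0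
  · rw [hx, inner_zero_right, norm_zero, sq, zero_mul]
    exact mul_nonneg hr (hx ▸ hV x)
  · exact hle ⟨x, hx⟩

omit [CompleteSpace H] in
theorem forall_re_inner_apply_add_nonneg_iff {V : H →ₗ.[ℂ] H}
    (hV : ∀ x : V.domain, 0 ≤ (⟪(x : H), V x⟫).re) (w : H) (c : ℝ) :
    (∀ x : V.domain, 0 ≤ (⟪(x : H), V x⟫).re + (I * ⟪w, V x⟫).re + c) ↔
      0 ≤ c ∧ anSup V w ≤ ENNReal.ofReal (4 * c) := by
  have hscale : ∀ (x : V.domain) (μ : ℂ),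
      (⟪((μ • x : V.domain) : H), V (μ • x)⟫).re + (I * ⟪w, V (μ • x)⟫).re + c
        = ‖μ‖ ^ 2 * (⟪(x : H), V x⟫).re + (μ * (I * ⟪w, V x⟫)).re + c := by
    intro x μ
    rw [V.map_smul, Submodule.coe_smul, inner_smul_left, inner_smul_right, inner_smul_right,
      ← mul_assoc, Complex.conj_mul', mul_left_comm]
    norm_cast
    rw [Complex.re_ofReal_mul]
  have hnorm : ∀ x : V.domain, ‖I * ⟪w, V x⟫‖ = ‖⟪w, V x⟫‖ := fun x => by
    rw [norm_mul, Complex.norm_I, one_mul]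
  constructor
  · intro h
    have hc : 0 ≤ c := by simpa using h 0
    refine ⟨hc, (anSup_le_ofReal_iff hV w (by positivity)).2 fun x => ?_⟩
    have hx := (forall_sq_norm_mul_add_re_mul_add_nonneg_iff (hV x) (I * ⟪w, V x⟫)).1
      fun μ => hscale x μ ▸ h (μ • x)
    rw [hnorm] at hx
    linarith [hx.2]
  · rintro ⟨hc, hw⟩ x
    have hx := (anSup_le_ofReal_iff hV w (by positivity)).1 hw x
    have h1 := (forall_sq_norm_mul_add_re_mul_add_nonneg_iff (hV x) (I * ⟪w, V x⟫)).2
      ⟨hc, by rw [hnorm]; linarith⟩ 1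
    simpa using h1

theorem IsKreinSqrt.exists_mem_domain_sq_norm_le_iff {V W : H →ₗ.[ℂ] H} (hW : IsKreinSqrt V W)
    (h : H) (r : ℝ) :
    (∃ hh : h ∈ W.domain, ‖W ⟨h, hh⟩‖ ^ 2 ≤ r) ↔ 0 ≤ r ∧ anSup V h ≤ ENNReal.ofReal r := by
  obtain ⟨-, -, -, hdom, hnorm⟩ := hW
  constructor
  · rintro ⟨hh, hle⟩
    exact ⟨(sq_nonneg _).trans hle, hnorm h hh ▸ ENNReal.ofReal_le_ofReal hle⟩
  · rintro ⟨hr, hle⟩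
    have hh := (hdom h).2 (hle.trans_lt ENNReal.ofReal_lt_top)
    exact ⟨hh, (ENNReal.ofReal_le_ofReal_iff hr).1 (hnorm h hh ▸ hle)⟩

theorem IsFriedrichsSqrt.exists_inner_apply_eq {V W : H →ₗ.[ℂ] H} (hW : IsFriedrichsSqrt V W)
    (x : V.domain) :
    ∃ hx : (x : H) ∈ W.domain,
      ∀ (h : H) (hh : h ∈ W.domain), ⟪h, V x⟫ = ⟪W ⟨h, hh⟩, W ⟨x, hx⟩⟫ := by
  obtain ⟨hWsa, -, ⟨T, ⟨hTdom, hTapp⟩, -, -, hVT⟩, -⟩ := hW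
  obtain ⟨hxW, hWxW⟩ := (hTdom x).1 (hVT.1 x.2)
  refine ⟨hxW, fun h hh => ?_⟩
  rw [hVT.2 (x := x) (y := ⟨x, hVT.1 x.2⟩) rfl, hTapp _ _ hxW hWxW]
  exact (hWsa.inner_apply_left ⟨h, hh⟩ ⟨_, hWxW⟩).symm

theorem IsFriedrichsSqrt.re_inner_apply_self_nonneg {V W : H →ₗ.[ℂ] H} (hW : IsFriedrichsSqrt V W)
    (x : V.domain) : 0 ≤ (⟪(x : H), V x⟫).re := by
  obtain ⟨hx, hWx⟩ := hW.exists_inner_apply_eq x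
  rw [hWx x hx]
  exact inner_self_nonneg (𝕜 := ℂ)

theorem IsFriedrichsSqrt.domain_le_domain {V WF WK : H →ₗ.[ℂ] H} (hF : IsFriedrichsSqrt V WF)
    (hK : IsKreinSqrt V WK) : WF.domain ≤ WK.domain := by
  obtain ⟨-, -, -, hdom, -⟩ := hK
  intro h hh
  rw [hdom]
  refine lt_of_le_of_lt ?_ (ENNReal.ofReal_lt_top (r := ‖WF ⟨h, hh⟩‖ ^ 2))
  refine (anSup_le_ofReal_iff hF.re_inner_apply_self_nonneg h (sq_nonneg _)).2 fun x => ?_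
  obtain ⟨hx, hWx⟩ := hF.exists_inner_apply_eq x
  rw [hWx h hh, hWx x hx, ← RCLike.re_to_complex, inner_self_eq_norm_sq, ← mul_pow]
  exact pow_le_pow_left₀ (norm_nonneg _) (norm_inner_le_norm _ _) 2

theorem im_inner_add_apply_eq {A At V W : H →ₗ.[ℂ] H} (hAt : Dense (At.domain : Set H))
    (hdual : A ≤ At.adjoint) (hVA : V.domain ≤ A.domain) (hVAt : V.domain ≤ At.domain)
    (hV : ∀ (x : H) (hxV : x ∈ V.domain) (hxA : x ∈ A.domain) (hxAt : x ∈ At.domain),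
      V ⟨x, hxV⟩ = (2 * I)⁻¹ • (A ⟨x, hxA⟩ - At ⟨x, hxAt⟩))
    (hW : IsFriedrichsSqrt V W) (x : V.domain) (v : At.adjoint.domain) {p : H}
    (hp : p ∈ W.domain) (hWp : W ⟨p, hp⟩ ∈ W.domain) :
    (⟪(x : H) + v, A ⟨x, hVA x.2⟩ + (At.adjoint v + W ⟨W ⟨p, hp⟩, hWp⟩)⟫).im
      = (⟪(x : H), V x⟫).re + (I * ⟪p + (2 * I) • (v : H), V x⟫).re
        + ((⟪(v : H), At.adjoint v⟫).im + (⟪(v : H), W ⟨W ⟨p, hp⟩, hWp⟩⟫).im) := by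
  have hpair := LinearPMap.adjoint_isFormalAdjoint hAt
  have hAx : At.adjoint ⟨x, hdual.1 (hVA x.2)⟩ = A ⟨x, hVA x.2⟩ := (hdual.2 rfl).symm
  obtain ⟨hxW, hWx⟩ := hW.exists_inner_apply_eq x
  refine im_inner_add_add_eq (b := At ⟨x, hVAt x.2⟩) ?_ ?_ ?_ ?_
  · rw [hV x x.2 (hVA x.2) (hVAt x.2), smul_inv_smul₀ (by simp), add_sub_cancel]
  · rw [← hpair ⟨x, hdual.1 (hVA x.2)⟩, hAx, inner_conj_symm]
  · rw [← hpair v, inner_conj_symm]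
  · rw [← hW.1.inner_apply_left ⟨x, hxW⟩ ⟨_, hWp⟩, hWx p hp, inner_conj_symm]

theorem forall_im_inner_add_apply_nonneg_iff {A At V WF WK : H →ₗ.[ℂ] H}
    (hAt : Dense (At.domain : Set H)) (hdual : A ≤ At.adjoint) (hVA : V.domain ≤ A.domain)
    (hVAt : V.domain ≤ At.domain) (hcore : (A.domRestrict V.domain).closure = A)
    (hV : ∀ (x : H) (hxV : x ∈ V.domain) (hxA : x ∈ A.domain) (hxAt : x ∈ At.domain),
      V ⟨x, hxV⟩ = (2 * I)⁻¹ • (A ⟨x, hxA⟩ - At ⟨x, hxAt⟩))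
    (hF : IsFriedrichsSqrt V WF) (hK : IsKreinSqrt V WK) (v : At.adjoint.domain) {p : H}
    (hp : p ∈ WF.domain) (hWp : WF ⟨p, hp⟩ ∈ WF.domain) :
    (∀ f : A.domain,
        0 ≤ (⟪(f : H) + v, A f + (At.adjoint v + WF ⟨WF ⟨p, hp⟩, hWp⟩)⟫).im) ↔
      ∃ hw : p + (2 * I) • (v : H) ∈ WK.domain, ‖WK ⟨_, hw⟩‖ ^ 2
        ≤ 4 * ((⟪(v : H), At.adjoint v⟫).im + (⟪(v : H), WF ⟨WF ⟨p, hp⟩, hWp⟩⟫).im) := by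
  have hid (x : V.domain) := im_inner_add_apply_eq hAt hdual hVA hVAt hV hF x v hp hWp
  have hS : IsClosed {q : H × H |
      0 ≤ (⟪q.1 + v, q.2 + (At.adjoint v + WF ⟨WF ⟨p, hp⟩, hWp⟩)⟫).im} :=
    isClosed_le continuous_const (by fun_prop)
  rw [hK.exists_mem_domain_sq_norm_le_iff, mul_nonneg_iff_of_pos_left four_pos,
    ← forall_re_inner_apply_add_nonneg_iff hF.re_inner_apply_self_nonneg]
  refine ⟨fun h x => hid x ▸ h ⟨x, hVA x.2⟩, fun h f => ?_⟩
  exact LinearPMap.forall_mem_of_closure_domRestrict_eq hcore hS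
    (fun f hf => show (0 : ℝ) ≤ _ from (hid ⟨f, hf⟩).symm ▸ h ⟨f, hf⟩) f

theorem statement10_general
    (A At V : H →ₗ.[ℂ] H) (D : Submodule ℂ H)
    (hAtdense : Dense (At.domain : Set H))
    (hdual : A ≤ At.adjoint)
    (hDA : D ≤ A.domain) (hDAt : D ≤ At.domain)
    (hcoreA : (A.domRestrict D).closure = A)
    (hVdom : V.domain = D)
    (hV : ∀ (x : H) (hxV : x ∈ V.domain) (hxA : x ∈ A.domain) (hxAt : x ∈ At.domain),
      V ⟨x, hxV⟩ = (2 * Complex.I)⁻¹ • (A ⟨x, hxA⟩ - At ⟨x, hxAt⟩))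
    (𝓥 : Submodule ℂ H) (h𝓥 : 𝓥 ≤ At.adjoint.domain)
    (L : 𝓥 →ₗ[ℂ] H)
    (WF WK : H →ₗ.[ℂ] H)
    (hWF : IsFriedrichsSqrt V WF) (hWK : IsKreinSqrt V WK)
    (φ : 𝓥 → H)
    (hφ1 : ∀ v : 𝓥, φ v ∈ WF.domain)
    (hφ2 : ∀ v : 𝓥, WF ⟨φ v, hφ1 v⟩ ∈ WF.domain)
    (hφ3 : ∀ v : 𝓥, WF ⟨WF ⟨φ v, hφ1 v⟩, hφ2 v⟩ = L v) :
    (∀ (f : A.domain) (v : 𝓥) (hfv : (f : H) + (v : H) ∈ At.adjoint.domain),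
      0 ≤ (⟪(f : H) + (v : H), At.adjoint ⟨(f : H) + (v : H), hfv⟩ + L v⟫).im) ↔
      ((∀ v : 𝓥, (v : H) ∈ WK.domain) ∧
        ∀ (v : 𝓥) (hv : (v : H) ∈ At.adjoint.domain)
          (hm : φ v + (2 * Complex.I) • (v : H) ∈ WK.domain),
          (1 / 4) * ‖WK ⟨φ v + (2 * Complex.I) • (v : H), hm⟩‖ ^ 2
            ≤ (⟪(v : H), At.adjoint ⟨(v : H), hv⟩⟫).im + (⟪(v : H), L v⟫).im) := by
  subst hVdom
  have hcore (v : 𝓥) := forall_im_inner_add_apply_nonneg_iff hAtdense hdual hDA hDAt hcoreA hV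
    hWF hWK ⟨v, h𝓥 v.2⟩ (hφ1 v) (hφ2 v)
  simp only [hφ3] at hcore
  have hext (f : A.domain) (v : 𝓥) (hfv : (f : H) + (v : H) ∈ At.adjoint.domain) :
      At.adjoint ⟨(f : H) + v, hfv⟩ + L v = A f + (At.adjoint ⟨v, h𝓥 v.2⟩ + L v) := by
    rw [LinearPMap.apply_add_of_le hdual f ⟨v, h𝓥 v.2⟩ hfv, add_assoc]
  have hmem (v : 𝓥) : φ v + (2 * I) • (v : H) ∈ WK.domain ↔ (v : H) ∈ WK.domain :=
    (Submodule.add_mem_iff_right _ (hWF.domain_le_domain hWK (hφ1 v))).trans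
      (Submodule.smul_mem_iff _ (by simp))
  constructor
  · intro h
    have hK (v : 𝓥) := (hcore v).1 fun f => hext f v _ ▸ h f v (add_mem (hdual.1 f.2) (h𝓥 v.2))
    exact ⟨fun v => (hmem v).1 (hK v).1, fun v _ _ => by linarith [(hK v).2]⟩
  · rintro ⟨hK, hle⟩ f v hfv
    rw [hext]
    exact (hcore v).2 ⟨(hmem v).2 (hK v), by linarith [hle v (h𝓥 v.2) ((hmem v).2 (hK v))]⟩ f

/-- If `L v = V_F φ_v` with `φ_v ∈ D(V_F)` for every `v ∈ 𝓥`, then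
`A_{𝓥,L}` is dissipative iff `𝓥 ⊆ D(V_K^{1/2})` and
`Im ⟪v, Ã* v⟫ + Im ⟪v, V_F φ_v⟫ ≥ ¼ ‖V_K^{1/2}(φ_v + 2iv)‖²` for all `v ∈ 𝓥`. -/
theorem statement10
    (A At V : H →ₗ.[ℂ] H) (D : Submodule ℂ H)
    (hAdense : Dense (A.domain : Set H)) (hAtdense : Dense (At.domain : Set H))
    (hAclosed : A.IsClosed) (hAtclosed : At.IsClosed)
    (hdual : A ≤ At.adjoint)
    (hDA : D ≤ A.domain) (hDAt : D ≤ At.domain)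
    (hcoreA : (A.domRestrict D).closure = A)
    (hcoreAt : (At.domRestrict D).closure = At)
    (hdiss : Dissipative A)
    (hVdom : V.domain = D)
    (hV : ∀ (x : H) (hxV : x ∈ V.domain) (hxA : x ∈ A.domain) (hxAt : x ∈ At.domain),
      V ⟨x, hxV⟩ = (2 * Complex.I)⁻¹ • (A ⟨x, hxA⟩ - At ⟨x, hxAt⟩))
    (𝓥 : Submodule ℂ H) (h𝓥 : 𝓥 ≤ At.adjoint.domain) (h𝓥A : 𝓥 ⊓ A.domain = ⊥)
    (L : 𝓥 →ₗ[ℂ] H)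
    (WF WK : H →ₗ.[ℂ] H)
    (hWF : IsFriedrichsSqrt V WF) (hWK : IsKreinSqrt V WK)
    (φ : 𝓥 → H)
    (hφ1 : ∀ v : 𝓥, φ v ∈ WF.domain)
    (hφ2 : ∀ v : 𝓥, WF ⟨φ v, hφ1 v⟩ ∈ WF.domain)
    (hφ3 : ∀ v : 𝓥, WF ⟨WF ⟨φ v, hφ1 v⟩, hφ2 v⟩ = L v) :
    (∀ (f : A.domain) (v : 𝓥) (hfv : (f : H) + (v : H) ∈ At.adjoint.domain),
      0 ≤ (⟪(f : H) + (v : H), At.adjoint ⟨(f : H) + (v : H), hfv⟩ + L v⟫).im) ↔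
      ((∀ v : 𝓥, (v : H) ∈ WK.domain) ∧
        ∀ (v : 𝓥) (hv : (v : H) ∈ At.adjoint.domain)
          (hm : φ v + (2 * Complex.I) • (v : H) ∈ WK.domain),
          (1 / 4) * ‖WK ⟨φ v + (2 * Complex.I) • (v : H), hm⟩‖ ^ 2
            ≤ (⟪(v : H), At.adjoint ⟨(v : H), hv⟩⟫).im + (⟪(v : H), L v⟫).im) :=
  statement10_general A At V D hAtdense hdual hDA hDAt hcoreA hVdom hV 𝓥 h𝓥 L WF WK hWF hWK φ hφ1
    hφ2 hφ3
end
end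

section
/- Let A be a densely defined dissipative operator on a complex Hilbert space H such that the quadratic form f ↦ Im⟨f, Af⟩ on D(A) is bounded, i.e., there is C ≥ 0 with 0 ≤ Im⟨f, Af⟩ ≤ C‖f‖² for all f ∈ D(A). Then there exist a symmetric operator S with D(S) = D(A) and a bounded selfadjoint operator V' on H with V' ≥ 0 such that Af = Sf + i V'f for all f ∈ D(A). -/
/-!
The form `b(f, g) = (i/2)(⟪A f, g⟫ - ⟪f, A g⟫)` on `D(A)` is hermitian with
`b(f, f) = Im ⟪f, A f⟫`, so it is positive semidefinite and, by Cauchy–Schwarz,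
`|b(f, g)|² ≤ b(f, f) b(g, g) ≤ C² ‖f‖² ‖g‖²`.
A bounded form on a dense subspace is represented by a bounded operator `V'`, which inherits
hermiticity and positivity by continuity; then `S = A - i V'` is symmetric on `D(A)`.
-/

noncomputable section

open Complex

variable {H : Type*} [NormedAddCommGroup H] [InnerProductSpace ℂ H] [CompleteSpace H]

local notation "⟪" x ", " y "⟫" => @inner ℂ _ _ x y

open ComplexConjugate

section SesquilinearForm

variable {M : Type*} [AddCommGroup M] [Module ℂ M]

theorem norm_apply_sq_le_of_hermitian (b : M →ₗ⋆[ℂ] M →ₗ[ℂ] ℂ)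
    (hherm : ∀ x y, conj (b y x) = b x y) (hpos : ∀ x, 0 ≤ (b x x).re) (x y : M) :
    ‖b x y‖ ^ 2 ≤ (b x x).re * (b y y).re := by
  let core : PreInnerProductSpace.Core ℂ M :=
    { inner := fun x y => b x y
      conj_inner_symm := hherm
      re_inner_nonneg := hpos
      add_left := fun x y z => by simp
      smul_left := fun x y r => by simp }
  have h : ‖b x y‖ * ‖b y x‖ ≤ (b x x).re * (b y y).re :=
    @InnerProductSpace.Core.inner_mul_inner_self_le ℂ M _ _ _ core x y
  rwa [← RCLike.norm_conj (b y x), hherm, ← sq] at h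

end SesquilinearForm

section DenseSubspace

variable {E : Type*} [NormedAddCommGroup E] [InnerProductSpace ℂ E] {D : Submodule ℂ E}

theorem exists_continuousLinearMap_inner_eq_of_dense [CompleteSpace E] (hD : Dense (D : Set E))
    (b : D →ₗ⋆[ℂ] D →ₗ[ℂ] ℂ) {C : ℝ} (hC : 0 ≤ C) (hb : ∀ f g, ‖b f g‖ ≤ C * ‖f‖ * ‖g‖) :
    ∃ T : E →L[ℂ] E, ∀ f g : D, ⟪T f, (g : E)⟫ = b f g := by
  have hdense : DenseRange D.subtype := hD.denseRange_val
  have hbound : ∀ f g, ‖b f g‖ ≤ C * ‖f‖ * ‖D.subtype g‖ := hb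
  have hext : ∀ f (L : E →L[ℂ] ℂ), (∀ g : D, L g = b f g) → (b f).extendOfNorm D.subtype = L :=
    fun f L hL => LinearMap.extendOfNorm_unique hdense _ (hbound f) L (LinearMap.ext hL)
  have hext_eq : ∀ f (g : D), (b f).extendOfNorm D.subtype g = b f g :=
    fun f => LinearMap.extendOfNorm_eq hdense ⟨_, hbound f⟩
  let Ψ : D →ₗ⋆[ℂ] (E →L[ℂ] ℂ) :=
    { toFun := fun f => (b f).extendOfNorm D.subtype
      map_add' := fun f f' => hext _ _ fun g => by simp [hext_eq]
      map_smul' := fun c f => hext _ _ fun g => by simp [hext_eq] }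
  have hΨ : ∀ f, ‖Ψ f‖ ≤ C * ‖f‖ := fun f =>
    LinearMap.opNorm_extendOfNorm_le hdense (by positivity) (hbound f)
  let T₀ : D →ₗ[ℂ] E := (InnerProductSpace.toDual ℂ E).symm.toLinearEquiv.toLinearMap ∘ₛₗ Ψ
  have hT₀ : ∀ f, ‖T₀ f‖ ≤ C * ‖D.subtype f‖ := fun f => by
    simpa [T₀] using hΨ f
  refine ⟨T₀.extendOfNorm D.subtype, fun f g => ?_⟩
  rw [show (f : E) = D.subtype f from rfl, LinearMap.extendOfNorm_eq hdense ⟨C, hT₀⟩]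
  simp [T₀, Ψ, InnerProductSpace.toDual_symm_apply, hext_eq]

theorem isSelfAdjoint_of_dense [CompleteSpace E] (hD : Dense (D : Set E)) {T : E →L[ℂ] E}
    (hT : ∀ f g : D, ⟪T f, (g : E)⟫ = ⟪(f : E), T g⟫) : IsSelfAdjoint T := by
  refine ContinuousLinearMap.isSelfAdjoint_iff_isSymmetric.2 fun x y => ?_
  exact hD.denseRange_val.induction_on₂ (p := fun x y => ⟪T x, y⟫ = ⟪x, T y⟫)
    (isClosed_eq (by fun_prop) (by fun_prop)) hT x y

theorem re_inner_apply_self_nonneg_of_dense (hD : Dense (D : Set E)) {T : E →L[ℂ] E}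
    (hT : ∀ f : D, 0 ≤ (⟪(f : E), T f⟫).re) (x : E) : 0 ≤ (⟪x, T x⟫).re :=
  hD.denseRange_val.induction_on (p := fun x => 0 ≤ (⟪x, T x⟫).re) x
    (isClosed_le continuous_const (by fun_prop)) hT

end DenseSubspace

section ImaginaryPart

variable {E : Type*} [NormedAddCommGroup E] [InnerProductSpace ℂ E]

/-- `⟪f, (A - A*) g⟫ / 2i`, written so that it makes sense on `D(A)` without the adjoint. -/
def imagPartForm (A : E →ₗ.[ℂ] E) : A.domain →ₗ⋆[ℂ] A.domain →ₗ[ℂ] ℂ :=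
  LinearMap.mk₂'ₛₗ (starRingEnd ℂ) (RingHom.id ℂ)
    (fun f g => I / 2 * (⟪A f, (g : E)⟫ - ⟪(f : E), A g⟫))
    (fun f f' g => by simp only [LinearPMap.map_add, Submodule.coe_add, inner_add_left]; ring)
    (fun c f g => by
      simp only [LinearPMap.map_smul, Submodule.coe_smul, inner_smul_left, smul_eq_mul]; ring)
    (fun f g g' => by simp only [LinearPMap.map_add, Submodule.coe_add, inner_add_right]; ring)
    (fun c f g => by
      simp only [LinearPMap.map_smul, Submodule.coe_smul, inner_smul_right, smul_eq_mul,
        RingHom.id_apply]; ring)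

variable (A : E →ₗ.[ℂ] E)

theorem imagPartForm_apply (f g : A.domain) :
    imagPartForm A f g = I / 2 * (⟪A f, (g : E)⟫ - ⟪(f : E), A g⟫) := rfl

theorem conj_imagPartForm (f g : A.domain) : conj (imagPartForm A g f) = imagPartForm A f g := by
  simp only [imagPartForm_apply, map_mul, map_sub, map_div₀, conj_I, map_ofNat, inner_conj_symm]
  ring

theorem imagPartForm_self (f : A.domain) : imagPartForm A f f = (⟪(f : E), A f⟫).im := by
  rw [imagPartForm_apply, ← inner_conj_symm, ← neg_sub, sub_conj]
  push_cast
  linear_combination (-((⟪(f : E), A f⟫).im : ℂ)) * I_sq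

theorem norm_imagPartForm_le (hdiss : Dissipative A) {C : ℝ} (hC : 0 ≤ C)
    (hbdd : ∀ f : A.domain, (⟪(f : E), A f⟫).im ≤ C * ‖(f : E)‖ ^ 2) (f g : A.domain) :
    ‖imagPartForm A f g‖ ≤ C * ‖f‖ * ‖g‖ := by
  have hre : ∀ f, (imagPartForm A f f).re = (⟪(f : E), A f⟫).im := fun f => by
    rw [imagPartForm_self, ofReal_re]
  have hCS := norm_apply_sq_le_of_hermitian (imagPartForm A) (conj_imagPartForm A)
    (fun f => hre f ▸ hdiss f) f g
  refine (pow_le_pow_iff_left₀ (norm_nonneg _) (by positivity) two_ne_zero).1 ?_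
  calc ‖imagPartForm A f g‖ ^ 2 ≤ (⟪(f : E), A f⟫).im * (⟪(g : E), A g⟫).im := by
        rwa [hre, hre] at hCS
    _ ≤ (C * ‖f‖ ^ 2) * (C * ‖g‖ ^ 2) := by
        gcongr
        exacts [hdiss g, hbdd f, hbdd g]
    _ = (C * ‖f‖ * ‖g‖) ^ 2 := by ring

end ImaginaryPart

theorem isSymmetricP_neg_I_smul_vadd {A : H →ₗ.[ℂ] H} {V : H →L[ℂ] H}
    (hV : IsSelfAdjoint V) (hVA : ∀ f g : A.domain, ⟪V f, (g : H)⟫ = imagPartForm A f g) :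
    IsSymmetricP ((-(I • (V : H →ₗ[ℂ] H))) +ᵥ A) := by
  intro f g
  have hVA' : ⟪(f : H), V g⟫ = imagPartForm A f g := by
    rw [← hVA]; exact (hV.isSymmetric f g).symm
  simp only [LinearPMap.vadd_apply, LinearMap.neg_apply, LinearMap.smul_apply,
    ContinuousLinearMap.coe_coe, inner_add_left, inner_add_right, inner_neg_left,
    inner_neg_right, inner_smul_left, inner_smul_right, hVA, hVA', imagPartForm_apply, conj_I]
  linear_combination (⟪(f : H), A g⟫ - ⟪A f, (g : H)⟫) * I_sq

/-- If `A` is densely defined dissipative and the form `f ↦ Im ⟪f, A f⟫` is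
bounded, then `A = S + iV'` with `S` symmetric on `D(A)` and `V'` a bounded non-negative
selfadjoint operator. -/
theorem statement14
    (A : H →ₗ.[ℂ] H) (hdense : Dense (A.domain : Set H)) (hdiss : Dissipative A)
    (C : ℝ) (hC : 0 ≤ C)
    (hbdd : ∀ f : A.domain, (⟪(f : H), A f⟫).im ≤ C * ‖(f : H)‖ ^ 2) :
    ∃ (S : H →ₗ.[ℂ] H) (V' : H →L[ℂ] H),
      S.domain = A.domain ∧ IsSymmetricP S ∧ IsSelfAdjoint V' ∧
      (∀ f : H, 0 ≤ (⟪f, V' f⟫).re) ∧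
      ∀ (x : H) (hxA : x ∈ A.domain) (hxS : x ∈ S.domain),
        A ⟨x, hxA⟩ = S ⟨x, hxS⟩ + Complex.I • V' x := by
  obtain ⟨V', hV'⟩ := exists_continuousLinearMap_inner_eq_of_dense hdense (imagPartForm A) hC
    (norm_imagPartForm_le A hdiss hC hbdd)
  have hsa : IsSelfAdjoint V' := isSelfAdjoint_of_dense hdense fun f g => by
    rw [hV', ← inner_conj_symm, hV', conj_imagPartForm]
  refine ⟨(-(I • (V' : H →ₗ[ℂ] H))) +ᵥ A, V', rfl, isSymmetricP_neg_I_smul_vadd hsa hV', hsa,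
    re_inner_apply_self_nonneg_of_dense hdense fun f => ?_, fun x hxA hxS => ?_⟩
  · rw [← inner_conj_symm, hV', imagPartForm_self, conj_re, ofReal_re]
    exact hdiss f
  · simp [LinearPMap.vadd_apply]
end
end

section
/- Let S be a closed, densely defined symmetric operator on a complex Hilbert space H, let V be a bounded non-negative selfadjoint operator on H, and let A := (S + iV)↾_{D(S)}, i.e., D(A) = D(S) and Af = Sf + iVf. If B is a dissipative operator extending A, then D(B) ⊆ D(S*). -/
/-!
For a dissipative `B`, the form `(x, y) ↦ (⟪x, B y⟫ - ⟪B x, y⟫) / 2i` on `D(B)` is Hermitian and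
positive semidefinite, with diagonal `Im ⟪x, B x⟫`, so it satisfies the Cauchy–Schwarz inequality.
For `f ∈ D(S)` we have `B f = S f + i V f`, and since `S` is symmetric the diagonal term is
`Re ⟪f, V f⟫ ≤ ‖V‖ ‖f‖²`. Cauchy–Schwarz with `x = f` and `y = g ∈ D(B)` then bounds `|⟪S f, g⟫|`
by a multiple of `‖f‖`, so `f ↦ ⟪g, S f⟫` is continuous and `g ∈ D(S*)`.
-/

noncomputable section

open Complex

variable {H : Type*} [NormedAddCommGroup H] [InnerProductSpace ℂ H] [CompleteSpace H]

local notation "⟪" x ", " y "⟫" => @inner ℂ _ _ x y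

open scoped ComplexConjugate

theorem LinearPMap.mem_adjoint_domain_of_norm_inner_le {𝕜 E F : Type*} [RCLike 𝕜]
    [NormedAddCommGroup E] [InnerProductSpace 𝕜 E] [CompleteSpace E]
    [NormedAddCommGroup F] [InnerProductSpace 𝕜 F] {T : E →ₗ.[𝕜] F} (y : F) (C : ℝ)
    (h : ∀ x : T.domain, ‖inner 𝕜 y (T x)‖ ≤ C * ‖(x : E)‖) :
    y ∈ T.adjoint.domain :=
  (T.mem_adjoint_domain_iff y).2 <| AddMonoidHomClass.continuous_of_bound _ C h

section

variable {E : Type*} [NormedAddCommGroup E] [InnerProductSpace ℂ E]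

theorem IsSymmetricP.im_inner_self_eq_zero {S : E →ₗ.[ℂ] E} (hS : IsSymmetricP S)
    (f : S.domain) : (⟪(f : E), S f⟫).im = 0 := by
  have h := congrArg im ((hS f f).trans (inner_conj_symm _ _).symm)
  rw [conj_im] at h
  linarith

theorem IsSymmetricP.im_inner_add_I_smul_le {S : E →ₗ.[ℂ] E} (hS : IsSymmetricP S)
    (V : E →L[ℂ] E) (f : S.domain) :
    (⟪(f : E), S f + I • V f⟫).im ≤ ‖V‖ * ‖(f : E)‖ ^ 2 := by
  rw [inner_add_right, inner_smul_right, add_im, hS.im_inner_self_eq_zero, I_mul_im, zero_add]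
  calc (⟪(f : E), V f⟫).re ≤ ‖(f : E)‖ * ‖V f‖ := re_inner_le_norm (𝕜 := ℂ) _ _
    _ ≤ ‖(f : E)‖ * (‖V‖ * ‖(f : E)‖) := by gcongr; exact V.le_opNorm _
    _ = ‖V‖ * ‖(f : E)‖ ^ 2 := by ring

namespace LinearPMap

variable (B : E →ₗ.[ℂ] E)

def imPart (x y : B.domain) : ℂ :=
  (⟪(x : E), B y⟫ - ⟪B x, (y : E)⟫) / (2 * I)

theorem imPart_self (x : B.domain) : B.imPart x x = (⟪(x : E), B x⟫).im := by
  have h (a : ℝ) : ((2 * a : ℝ) : ℂ) * I / (2 * I) = a := by field_simp; push_cast; ring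
  rw [imPart, ← inner_conj_symm (B x), sub_conj, h]

theorem conj_imPart (x y : B.domain) : conj (B.imPart y x) = B.imPart x y := by
  simp only [imPart, map_div₀, _root_.map_sub, inner_conj_symm, map_mul, map_ofNat, conj_I,
    mul_neg]
  ring

abbrev imPartCore (hB : Dissipative B) : PreInnerProductSpace.Core ℂ B.domain where
  inner := B.imPart
  conj_inner_symm := B.conj_imPart
  re_inner_nonneg x := by
    rw [imPart_self]
    exact hB x
  add_left x y z := by
    simp only [imPart, Submodule.coe_add, LinearPMap.map_add, inner_add_left]
    ring
  smul_left x y r := by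
    simp only [imPart, Submodule.coe_smul, LinearPMap.map_smul, inner_smul_left]
    ring

theorem norm_inner_sub_inner_le (hB : Dissipative B) (x y : B.domain) :
    ‖⟪(x : E), B y⟫ - ⟪B x, (y : E)⟫‖ ≤
      2 * √(⟪(x : E), B x⟫).im * √(⟪(y : E), B y⟫).im := by
  have hcs : ‖B.imPart x y‖ * ‖B.imPart y x‖ ≤ (B.imPart x x).re * (B.imPart y y).re :=
    InnerProductSpace.Core.inner_mul_inner_self_le (c := B.imPartCore hB) x y
  rw [imPart_self, imPart_self, ofReal_re, ofReal_re, ← B.conj_imPart y x,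
    RCLike.norm_conj] at hcs
  have hq : ⟪(x : E), B y⟫ - ⟪B x, (y : E)⟫ = 2 * I * B.imPart x y := by
    rw [imPart]
    field_simp
  rw [hq, norm_mul, norm_mul, norm_I, Complex.norm_ofNat, mul_one, mul_assoc,
    ← Real.sqrt_mul (hB x)]
  gcongr
  exact (Real.le_sqrt (norm_nonneg _) (mul_nonneg (hB x) (hB y))).2 (by rw [sq]; exact hcs)

end LinearPMap

theorem norm_inner_le_of_dissipative_extension {S B : E →ₗ.[ℂ] E} (V : E →L[ℂ] E)
    (hS : IsSymmetricP S) (hdomB : S.domain ≤ B.domain)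
    (hB : ∀ (x : S.domain) (hx : (x : E) ∈ B.domain), B ⟨(x : E), hx⟩ = S x + I • V (x : E))
    (hBdiss : Dissipative B) (g : B.domain) (f : S.domain) :
    ‖⟪(g : E), S f⟫‖ ≤
      (‖B g‖ + ‖V‖ * ‖(g : E)‖ + 2 * √‖V‖ * √(⟪(g : E), B g⟫).im) * ‖(f : E)‖ := by
  have hcs := B.norm_inner_sub_inner_le hBdiss ⟨f, hdomB f.2⟩ g
  rw [hB] at hcs
  have hsqrt : √(⟪(f : E), S f + I • V f⟫).im ≤ √‖V‖ * ‖(f : E)‖ := by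
    rw [← Real.sqrt_sq (norm_nonneg (f : E)), ← Real.sqrt_mul (norm_nonneg V)]
    exact Real.sqrt_le_sqrt (hS.im_inner_add_I_smul_le V f)
  have hIV : ‖⟪I • V f, (g : E)⟫‖ ≤ ‖V‖ * ‖(f : E)‖ * ‖(g : E)‖ := by
    grw [norm_inner_le_norm, norm_smul, norm_I, one_mul, V.le_opNorm]
  have hsplit : ⟪S f, (g : E)⟫ = ⟪(f : E), B g⟫ - ⟪I • V f, (g : E)⟫ -
      (⟪(f : E), B g⟫ - ⟪S f + I • V f, (g : E)⟫) := by
    rw [inner_add_left]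
    ring
  rw [norm_inner_symm, hsplit]
  calc _
      ≤ ‖⟪(f : E), B g⟫‖ + ‖⟪I • V f, (g : E)⟫‖ +
          ‖⟪(f : E), B g⟫ - ⟪S f + I • V f, (g : E)⟫‖ := by
        grw [norm_sub_le, norm_sub_le]
    _ ≤ ‖(f : E)‖ * ‖B g‖ + ‖V‖ * ‖(f : E)‖ * ‖(g : E)‖ +
          2 * (√‖V‖ * ‖(f : E)‖) * √(⟪(g : E), B g⟫).im := by
        grw [norm_inner_le_norm, hIV, hcs, hsqrt]
    _ = _ := by ring

end

theorem statement15_general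
    (S : H →ₗ.[ℂ] H) (V : H →L[ℂ] H)
    (hSsymm : IsSymmetricP S)
    (B : H →ₗ.[ℂ] H)
    (hdomB : S.domain ≤ B.domain)
    (hB : ∀ (x : S.domain) (hx : (x : H) ∈ B.domain),
      B ⟨(x : H), hx⟩ = S x + Complex.I • V (x : H))
    (hBdiss : Dissipative B) :
    B.domain ≤ S.adjoint.domain := fun g hg =>
  LinearPMap.mem_adjoint_domain_of_norm_inner_le g _
    (norm_inner_le_of_dissipative_extension V hSsymm hdomB hB hBdiss ⟨g, hg⟩)

/-- If `S` is closed densely defined symmetric, `V` bounded non-negative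
selfadjoint, and `B` is a dissipative extension of `A = S + iV` (domain `D(S)`), then
`D(B) ⊆ D(S*)`. -/
theorem statement15
    (S : H →ₗ.[ℂ] H) (V : H →L[ℂ] H)
    (hSdense : Dense (S.domain : Set H)) (hSclosed : S.IsClosed) (hSsymm : IsSymmetricP S)
    (hVsa : IsSelfAdjoint V) (hVnn : ∀ f : H, 0 ≤ (⟪f, V f⟫).re)
    (B : H →ₗ.[ℂ] H)
    (hdomB : S.domain ≤ B.domain)
    (hB : ∀ (x : S.domain) (hx : (x : H) ∈ B.domain),
      B ⟨(x : H), hx⟩ = S x + Complex.I • V (x : H))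
    (hBdiss : Dissipative B) :
    B.domain ≤ S.adjoint.domain :=
  statement15_general S V hSsymm B hdomB hB hBdiss
end
end

section
/- Let S be a closed, densely defined symmetric operator on a complex Hilbert space H and let V be a bounded non-negative selfadjoint operator on H, with square root √V (the unique bounded non-negative selfadjoint operator with √V·√V = V). Let 𝒱 ⊆ D(S*) be a subspace with 𝒱 ∩ D(S) = {0} and let L : 𝒱 → H be linear. Then the operator S_{𝒱,L} + iV, where S_{𝒱,L} has domain D(S) ∔ 𝒱 and acts as f + v ↦ S*(f+v) + Lv, is dissipative — i.e., Im⟨f+v, S*(f+v) + Lv + iV(f+v)⟩ ≥ 0 for all f ∈ D(S), v ∈ 𝒱 — if and only if for every v ∈ 𝒱 there exists k_v ∈ (ker √V)^⊥ with √V k_v = Lv and Im⟨v, S*v⟩ ≥ (1/4)‖k_v‖². Moreover, every dissipative extension of A := (S + iV)↾_{D(S)} is of the form S_{𝒱,L} + iV for some such 𝒱 and L. -/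
noncomputable section

open Complex

variable {H : Type*} [NormedAddCommGroup H] [InnerProductSpace ℂ H] [CompleteSpace H]

local notation "⟪" x ", " y "⟫" => @inner ℂ _ _ x y

/-!
On `D(S)` the form `Im ⟪ψ, (S + iV) ψ⟫` is `‖√V ψ‖²`, and symmetry of `S` makes the cross terms
between `D(S)` and `D(S*)` real. Hence `Im ⟪f + v, (S_{𝓥,L} + iV)(f + v)⟫` equals
`Im ⟪v, S* v⟫ + Im ⟪f + v, L v⟫ + ‖√V (f + v)‖²`, which by density of `D(S)` is non-negative for
all `f` iff `c + Im ⟪g, L v⟫ + ‖√V g‖² ≥ 0` for all `g ∈ H`, with `c = Im ⟪v, S* v⟫`. Scaling `g`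
by complex numbers turns this into the discriminant bound `|⟪g, L v⟫| ≤ 2 √c ‖√V g‖`, i.e. the
functional `√V g ↦ ⟪L v, g⟫` is bounded by `2 √c`; its Riesz representative, projected onto
`(ker √V)ᗮ`, is `k_v`. For a dissipative extension `B` the same discriminant argument, applied
to `Im ⟪f + u, B (f + u)⟫` with `u ∈ D(B)`, bounds `f ↦ ⟪u, S f⟫`, so `D(B) ⊆ D(S*)`.
-/

open ComplexConjugate

section RangeOfAdjoint

variable {𝕜 E F : Type*} [RCLike 𝕜] [NormedAddCommGroup E] [InnerProductSpace 𝕜 E]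
  [NormedAddCommGroup F] [InnerProductSpace 𝕜 F]

theorem ContinuousLinearMap.exists_mem_orthogonal_ker_apply_eq [CompleteSpace E]
    (T : E →L[𝕜] F) (x : E) :
    ∃ y ∈ (T : E →ₗ[𝕜] F).kerᗮ, T y = T x ∧ ‖y‖ ≤ ‖x‖ := by
  have : CompleteSpace (T : E →ₗ[𝕜] F).ker := T.isClosed_ker.completeSpace_coe
  set K := (T : E →ₗ[𝕜] F).ker
  refine ⟨x - K.starProjection x, K.sub_starProjection_mem_orthogonal x, ?_, ?_⟩
  · have : T (K.starProjection x) = 0 := K.starProjection_apply_mem x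
    rw [map_sub, this, sub_zero]
  · rw [← K.starProjection_orthogonal_val]
    exact Kᗮ.norm_starProjection_apply_le x

/-- Hahn–Banach and Riesz, applied to the functional `T g ↦ ⟪w, g⟫` on the range of `T`. -/
theorem ContinuousLinearMap.exists_adjoint_apply_eq_of_norm_inner_le [CompleteSpace E]
    [CompleteSpace F] (T : E →L[𝕜] F) (w : E) {C : ℝ} (hC : 0 ≤ C)
    (h : ∀ g, ‖inner 𝕜 w g‖ ≤ C * ‖T g‖) :
    ∃ k ∈ (adjoint T : F →ₗ[𝕜] E).kerᗮ, adjoint T k = w ∧ ‖k‖ ≤ C := by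
  have hker : (T : E →ₗ[𝕜] F).ker ≤ (innerₛₗ 𝕜 w).ker := fun g (hg : T g = 0) => by
    simpa [hg] using h g
  let ℓ : (T : E →ₗ[𝕜] F).range →ₗ[𝕜] 𝕜 :=
    (T : E →ₗ[𝕜] F).ker.liftQ _ hker ∘ₗ (T : E →ₗ[𝕜] F).quotKerEquivRange.symm
  have hℓ : ∀ g, ℓ ⟨T g, LinearMap.mem_range_self _ g⟩ = inner 𝕜 w g := fun g => by
    change (T : E →ₗ[𝕜] F).ker.liftQ _ hker
      ((T : E →ₗ[𝕜] F).quotKerEquivRange.symm ⟨(T : E →ₗ[𝕜] F) g, _⟩) = _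
    rw [LinearMap.quotKerEquivRange_symm_apply_image]
    rfl
  have hbound : ∀ r, ‖ℓ r‖ ≤ C * ‖r‖ := by
    rintro ⟨_, g, rfl⟩
    exact (hℓ g).symm ▸ h g
  obtain ⟨φ, hφ, hφnorm⟩ := exists_extension_norm_eq _ (ℓ.mkContinuous C hbound)
  set k := (InnerProductSpace.toDual 𝕜 F).symm φ
  have hk : adjoint T k = w := by
    refine ext_inner_right 𝕜 fun g => ?_
    rw [ContinuousLinearMap.adjoint_inner_left, InnerProductSpace.toDual_symm_apply, ← hℓ g]
    exact hφ ⟨T g, _⟩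
  have hknorm : ‖k‖ ≤ C := by
    rw [LinearIsometryEquiv.norm_map, hφnorm]
    exact ℓ.mkContinuous_norm_le hC hbound
  obtain ⟨k', hk', hTk', hk'norm⟩ := (adjoint T).exists_mem_orthogonal_ker_apply_eq k
  exact ⟨k', hk', hTk'.trans hk, hk'norm.trans hknorm⟩

end RangeOfAdjoint

theorem Complex.exists_norm_eq_one_conj_mul_eq (z : ℂ) :
    ∃ ω : ℂ, ‖ω‖ = 1 ∧ conj ω * z = -I * ‖z‖ := by
  set e := exp (z.arg * I)
  have he : ‖e‖ = 1 := norm_exp_ofReal_mul_I _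
  refine ⟨I * e, by rw [norm_mul, norm_I, he, one_mul], ?_⟩
  conv_lhs => rw [← norm_mul_exp_arg_mul_I z]
  have hee : conj e * e = 1 := by rw [conj_mul', he, ofReal_one, one_pow]
  rw [map_mul, conj_I]
  linear_combination (-I * ‖z‖) * hee

/-- Replacing `f` by `t ω • f` with `t` real and `|ω| = 1` chosen so that `Im ψ (ω • f) = -|ψ f|`
gives the real quadratic `r f² t² - |ψ f| t + c ≥ 0`, whose discriminant is `≤ 0`. -/
theorem norm_le_two_mul_sqrt_mul_of_forall_nonneg {D : Type*} [SMul ℂ D] (ψ : D → ℂ)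
    (r : D → ℝ) (c : ℝ) (hψ : ∀ (μ : ℂ) f, ψ (μ • f) = conj μ * ψ f)
    (hr : ∀ (μ : ℂ) f, r (μ • f) = ‖μ‖ * r f) (h : ∀ f, 0 ≤ c + (ψ f).im + r f ^ 2) (f : D) :
    ‖ψ f‖ ≤ 2 * √c * |r f| := by
  have hc : 0 ≤ c := by simpa [hψ, hr] using h ((0 : ℂ) • f)
  obtain ⟨ω, hω, hωψ⟩ := (ψ f).exists_norm_eq_one_conj_mul_eq
  have hquad : ∀ t : ℝ, 0 ≤ r f ^ 2 * (t * t) + (-‖ψ f‖) * t + c := fun t => by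
    have := h (((t : ℂ) * ω) • f)
    rw [hψ, hr, map_mul, conj_ofReal, mul_assoc, hωψ, norm_mul, hω, norm_real,
      Real.norm_eq_abs, mul_one, mul_pow, sq_abs] at this
    have him : ((t : ℂ) * (-I * ‖ψ f‖)).im = -‖ψ f‖ * t := by
      simp only [neg_mul, mul_neg, neg_im, mul_im, ofReal_re, I_re, ofReal_im, I_im]
      ring
    rw [him] at this
    linarith
  have hdisc := discrim_le_zero hquad
  rw [discrim] at hdisc
  have hsq : ‖ψ f‖ ^ 2 ≤ (2 * √c * |r f|) ^ 2 := by
    rw [mul_pow, mul_pow, Real.sq_sqrt hc, sq_abs]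
    linarith
  exact (pow_le_pow_iff_left₀ (norm_nonneg _) (by positivity) two_ne_zero).1 hsq

theorem quarter_mul_norm_sq_add_im_inner_add_norm_sq_nonneg {E : Type*} [NormedAddCommGroup E]
    [InnerProductSpace ℂ E] (x k : E) : 0 ≤ 1 / 4 * ‖k‖ ^ 2 + (⟪x, k⟫).im + ‖x‖ ^ 2 := by
  have h := (abs_le.1 ((abs_im_le_norm ⟪x, k⟫).trans (norm_inner_le_norm x k))).1
  nlinarith [sq_nonneg (‖x‖ - ‖k‖ / 2)]

theorem exists_mem_orthogonal_ker_of_forall_nonneg {T : H →L[ℂ] H} (hT : IsSelfAdjoint T)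
    {s : Set H} (hs : Dense s) (v y : H) (c : ℝ)
    (h : ∀ f ∈ s, 0 ≤ c + (⟪f + v, y⟫).im + ‖T (f + v)‖ ^ 2) :
    ∃ k ∈ (T : H →ₗ[ℂ] H).kerᗮ, T k = y ∧ 1 / 4 * ‖k‖ ^ 2 ≤ c := by
  have hall : ∀ g, 0 ≤ c + (⟪g, y⟫).im + ‖T g‖ ^ 2 := by
    have hclosed : IsClosed {f : H | 0 ≤ c + (⟪f + v, y⟫).im + ‖T (f + v)‖ ^ 2} :=
      isClosed_le continuous_const (by fun_prop)
    intro g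
    simpa using hclosed.closure_subset_iff.2 h (hs (g - v))
  have hc : 0 ≤ c := by simpa using hall 0
  have hbound : ∀ g, ‖⟪y, g⟫‖ ≤ 2 * √c * ‖T g‖ := fun g => by
    rw [norm_inner_symm]
    simpa using norm_le_two_mul_sqrt_mul_of_forall_nonneg (fun g => ⟪g, y⟫) (fun g => ‖T g‖) c
      (fun μ g => inner_smul_left _ _ _) (fun μ g => by rw [map_smul, norm_smul]) hall g
  obtain ⟨k, hk, hTk, hknorm⟩ :=
    T.exists_adjoint_apply_eq_of_norm_inner_le y (by positivity) hbound
  rw [hT.adjoint_eq] at hk hTk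
  refine ⟨k, hk, hTk, ?_⟩
  nlinarith [Real.sq_sqrt hc, norm_nonneg k, Real.sqrt_nonneg c]

theorem im_inner_I_smul_apply {T V : H →L[ℂ] H} (hT : IsSelfAdjoint T)
    (hTV : ∀ x, T (T x) = V x) (x : H) : (⟪x, I • V x⟫).im = ‖T x‖ ^ 2 := by
  have hsymm : ⟪T x, T x⟫ = ⟪x, T (T x)⟫ := hT.isSymmetric x (T x)
  rw [inner_smul_right, ← hTV, ← hsymm, inner_self_eq_norm_sq_to_K]
  simp only [mul_im, I_re, I_im, zero_mul, one_mul, zero_add]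
  norm_cast

theorem IsSymmetricP.im_inner_self_apply {E : Type*} [NormedAddCommGroup E]
    [InnerProductSpace ℂ E] {S : E →ₗ.[ℂ] E} (hS : IsSymmetricP S) (f : S.domain) :
    (⟪(f : E), S f⟫).im = 0 := by
  rw [← conj_eq_iff_im, inner_conj_symm]
  exact (hS f f).symm

namespace IsSymmetricP

variable {S : H →ₗ.[ℂ] H}

theorem le_adjoint (hS : IsSymmetricP S) (hdense : Dense (S.domain : Set H)) : S ≤ S.adjoint :=
  LinearPMap.IsFormalAdjoint.le_adjoint hdense fun x y => (hS x y).symm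

theorem adjoint_apply_add (hS : IsSymmetricP S) (hdense : Dense (S.domain : Set H))
    (f : S.domain) {u : H} (hu : u ∈ S.adjoint.domain)
    (hfu : (f : H) + u ∈ S.adjoint.domain) :
    S.adjoint ⟨(f : H) + u, hfu⟩ = S f + S.adjoint ⟨u, hu⟩ := by
  have hle := hS.le_adjoint hdense
  have hsplit : (⟨(f : H) + u, hfu⟩ : S.adjoint.domain) = ⟨f, hle.1 f.2⟩ + ⟨u, hu⟩ := rfl
  rw [hsplit, S.adjoint.map_add, ← hle.2 rfl]

theorem im_inner_adjoint_add (hS : IsSymmetricP S) (hdense : Dense (S.domain : Set H))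
    (f : S.domain) {u : H} (hu : u ∈ S.adjoint.domain)
    (hfu : (f : H) + u ∈ S.adjoint.domain) :
    (⟪(f : H) + u, S.adjoint ⟨(f : H) + u, hfu⟩⟫).im = (⟪u, S.adjoint ⟨u, hu⟩⟫).im := by
  have hcross : ⟪(f : H), S.adjoint ⟨u, hu⟩⟫ = conj ⟪u, S f⟫ := by
    rw [← LinearPMap.adjoint_isFormalAdjoint hdense ⟨u, hu⟩ f, inner_conj_symm]
  rw [hS.adjoint_apply_add hdense f hu hfu]
  simp only [inner_add_left, inner_add_right, hcross, add_im, conj_im, hS.im_inner_self_apply]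
  ring

theorem im_inner_adjoint_add_add_I_smul (hS : IsSymmetricP S) (hdense : Dense (S.domain : Set H))
    {T V : H →L[ℂ] H} (hT : IsSelfAdjoint T)
    (hTV : ∀ x, T (T x) = V x) (f : S.domain) {v : H} (hv : v ∈ S.adjoint.domain)
    (hfv : (f : H) + v ∈ S.adjoint.domain) (y : H) :
    (⟪(f : H) + v, S.adjoint ⟨(f : H) + v, hfv⟩ + y + I • V ((f : H) + v)⟫).im
      = (⟪v, S.adjoint ⟨v, hv⟩⟫).im + (⟪(f : H) + v, y⟫).im + ‖T ((f : H) + v)‖ ^ 2 := by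
  rw [inner_add_right, inner_add_right, add_im, add_im, hS.im_inner_adjoint_add hdense f hv hfv,
    im_inner_I_smul_apply hT hTV]

theorem nonneg_im_of_dissipative_extension (hS : IsSymmetricP S) {T V : H →L[ℂ] H}
    (hT : IsSelfAdjoint T) (hTV : ∀ x, T (T x) = V x) {B : H →ₗ.[ℂ] H}
    (hdom : S.domain ≤ B.domain)
    (hB : ∀ (x : S.domain) (hx : (x : H) ∈ B.domain), B ⟨(x : H), hx⟩ = S x + I • V (x : H))
    (hdis : Dissipative B) (u : B.domain) (g : S.domain) :
    0 ≤ (⟪(u : H), B u⟫).im + (⟪(g : H), B u⟫ - ⟪S g + I • V g, u⟫).im + ‖T g‖ ^ 2 := by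
  have h := hdis (⟨g, hdom g.2⟩ + u)
  rw [B.map_add, hB g] at h
  have hSg := hS.im_inner_self_apply g
  have hVg := im_inner_I_smul_apply hT hTV g
  simp only [Submodule.coe_add, inner_add_left, inner_add_right, add_im] at h
  simp only [sub_im, ← inner_conj_symm (S g + I • V g : H) u, conj_im, inner_add_right, add_im]
  linarith

theorem domain_le_adjoint_domain_of_dissipative (hS : IsSymmetricP S)
    {T V : H →L[ℂ] H} (hT : IsSelfAdjoint T)
    (hTV : ∀ x, T (T x) = V x) {B : H →ₗ.[ℂ] H} (hdom : S.domain ≤ B.domain)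
    (hB : ∀ (x : S.domain) (hx : (x : H) ∈ B.domain), B ⟨(x : H), hx⟩ = S x + I • V (x : H))
    (hdis : Dissipative B) : B.domain ≤ S.adjoint.domain := by
  intro u hu
  set Bu := B ⟨u, hu⟩
  set d := (⟪u, Bu⟫).im
  let ψ : S.domain → ℂ := fun g => ⟪(g : H), Bu⟫ - ⟪S g + I • V g, u⟫
  have hψ : ∀ (μ : ℂ) g, ψ (μ • g) = conj μ * ψ g := fun μ g => by
    simp only [ψ, Submodule.coe_smul, S.map_smul, map_smul, inner_add_left, inner_smul_left]
    ring
  have hψle : ∀ g : S.domain, ‖ψ g‖ ≤ 2 * √d * (‖T‖ * ‖(g : H)‖) := fun g => by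
    have h := norm_le_two_mul_sqrt_mul_of_forall_nonneg ψ (fun g => ‖T g‖) d hψ
      (fun μ g => by rw [Submodule.coe_smul, map_smul, norm_smul])
      (hS.nonneg_im_of_dissipative_extension hT hTV hdom hB hdis ⟨u, hu⟩) g
    rw [abs_norm] at h
    exact h.trans (by gcongr; exact T.le_opNorm g)
  have hSg : ∀ g : S.domain, ⟪S g, u⟫ = ⟪(g : H), Bu⟫ - ψ g - ⟪I • V g, u⟫ := fun g => by
    simp only [ψ, inner_add_left]
    ring
  rw [LinearPMap.mem_adjoint_domain_iff]
  refine AddMonoidHomClass.continuous_of_bound _ (‖Bu‖ + 2 * √d * ‖T‖ + ‖V‖ * ‖u‖)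
    fun g => ?_
  calc ‖⟪u, S g⟫‖ = ‖⟪(g : H), Bu⟫ - ψ g - ⟪I • V g, u⟫‖ := by rw [norm_inner_symm, hSg]
    _ ≤ ‖⟪(g : H), Bu⟫‖ + ‖ψ g‖ + ‖⟪I • V g, u⟫‖ :=
      (norm_sub_le _ _).trans (by gcongr; exact norm_sub_le _ _)
    _ ≤ ‖(g : H)‖ * ‖Bu‖ + 2 * √d * (‖T‖ * ‖(g : H)‖) + ‖V‖ * ‖(g : H)‖ * ‖u‖ := by
      gcongr
      · exact norm_inner_le_norm _ _
      · exact hψle g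
      · refine (norm_inner_le_norm _ _).trans ?_
        rw [norm_smul, norm_I, one_mul]
        gcongr
        exact V.le_opNorm g
    _ = (‖Bu‖ + 2 * √d * ‖T‖ + ‖V‖ * ‖u‖) * ‖g‖ := by rw [Submodule.coe_norm]; ring

theorem exists_linearMap_apply_add_eq (hS : IsSymmetricP S)
    (hdense : Dense (S.domain : Set H)) {V : H →L[ℂ] H} {B : H →ₗ.[ℂ] H}
    (hdom : S.domain ≤ B.domain)
    (hB : ∀ (x : S.domain) (hx : (x : H) ∈ B.domain), B ⟨(x : H), hx⟩ = S x + I • V (x : H))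
    {W : Submodule ℂ H} (hWB : W ≤ B.domain) (hWadj : W ≤ S.adjoint.domain) :
    ∃ L : W →ₗ[ℂ] H, ∀ (f : S.domain) (w : W) (hfwB : (f : H) + w ∈ B.domain)
      (hfwadj : (f : H) + w ∈ S.adjoint.domain),
      B ⟨(f : H) + w, hfwB⟩ = S.adjoint ⟨(f : H) + w, hfwadj⟩ + L w + I • V ((f : H) + w) := by
  let L : W →ₗ[ℂ] H := B.toFun ∘ₗ Submodule.inclusion hWB
    - S.adjoint.toFun ∘ₗ Submodule.inclusion hWadj - (I • (V : H →ₗ[ℂ] H)) ∘ₗ W.subtype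
  have hL : ∀ w : W, L w = B ⟨w, hWB w.2⟩ - S.adjoint ⟨w, hWadj w.2⟩ - I • V w := fun _ => rfl
  refine ⟨L, fun f w hfwB hfwadj => ?_⟩
  have hsplit : (⟨(f : H) + w, hfwB⟩ : B.domain) = ⟨f, hdom f.2⟩ + ⟨w, hWB w.2⟩ := rfl
  rw [hsplit, B.map_add, hB, hS.adjoint_apply_add hdense f (hWadj w.2) hfwadj, hL, map_add,
    smul_add]
  abel

end IsSymmetricP

theorem statement16_general
    (S : H →ₗ.[ℂ] H) (V sqV : H →L[ℂ] H)
    (hSdense : Dense (S.domain : Set H)) (hSsymm : IsSymmetricP S)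
    (hsq_sa : IsSelfAdjoint sqV)
    (hsq : ∀ x : H, sqV (sqV x) = V x)
    (𝓥 : Submodule ℂ H) (h𝓥 : 𝓥 ≤ S.adjoint.domain)
    (L : 𝓥 →ₗ[ℂ] H) :
    ((∀ (f : S.domain) (v : 𝓥) (hfv : (f : H) + (v : H) ∈ S.adjoint.domain),
        0 ≤ (⟪(f : H) + (v : H),
          S.adjoint ⟨(f : H) + (v : H), hfv⟩ + L v + Complex.I • V ((f : H) + (v : H))⟫).im)
      ↔ ∀ v : 𝓥, ∃ k : H, (∀ y : H, sqV y = 0 → ⟪y, k⟫ = 0) ∧ sqV k = L v ∧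
          ∀ hv : (v : H) ∈ S.adjoint.domain,
            (1 / 4) * ‖k‖ ^ 2 ≤ (⟪(v : H), S.adjoint ⟨(v : H), hv⟩⟫).im) ∧
    ∀ B : H →ₗ.[ℂ] H, S.domain ≤ B.domain →
      (∀ (x : S.domain) (hx : (x : H) ∈ B.domain),
        B ⟨(x : H), hx⟩ = S x + Complex.I • V (x : H)) →
      Dissipative B →
      ∃ (𝓦 : Submodule ℂ H) (_ : 𝓦 ≤ S.adjoint.domain) (_ : 𝓦 ⊓ S.domain = ⊥)
        (L' : 𝓦 →ₗ[ℂ] H),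
        B.domain = S.domain ⊔ 𝓦 ∧
        ∀ (f : S.domain) (w : 𝓦) (hB : (f : H) + (w : H) ∈ B.domain)
          (hadj : (f : H) + (w : H) ∈ S.adjoint.domain),
          B ⟨(f : H) + (w : H), hB⟩
            = S.adjoint ⟨(f : H) + (w : H), hadj⟩ + L' w
              + Complex.I • V ((f : H) + (w : H)) := by
  have hform := hSsymm.im_inner_adjoint_add_add_I_smul hSdense hsq_sa hsq
  refine ⟨⟨fun hdis v => ?_, fun hk f v hfv => ?_⟩, fun B hdom hB hdis => ?_⟩
  · obtain ⟨k, hk, hsqk, hknorm⟩ := exists_mem_orthogonal_ker_of_forall_nonneg hsq_sa hSdense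
      v (L v) _ fun f hf => by
        have hfv := add_mem ((hSsymm.le_adjoint hSdense).1 hf) (h𝓥 v.2)
        simpa only [hform ⟨f, hf⟩ (h𝓥 v.2) hfv] using hdis ⟨f, hf⟩ v hfv
    exact ⟨k, (Submodule.mem_orthogonal _ _).1 hk, hsqk, fun _ => hknorm⟩
  · obtain ⟨k, -, hsqk, hknorm⟩ := hk v
    have hsymm : ⟪(f : H) + v, sqV k⟫ = ⟪sqV ((f : H) + v), k⟫ :=
      (hsq_sa.isSymmetric _ _).symm
    rw [hform f (h𝓥 v.2) hfv, ← hsqk, hsymm]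
    linarith [hknorm (h𝓥 v.2), quarter_mul_norm_sq_add_im_inner_add_norm_sq_nonneg (sqV (f + v)) k]
  · obtain ⟨𝓦, hdisj, hsup⟩ := IsModularLattice.exists_disjoint_and_sup_eq hdom
    have h𝓦B : 𝓦 ≤ B.domain := hsup ▸ le_sup_right
    have h𝓦adj := h𝓦B.trans (hSsymm.domain_le_adjoint_domain_of_dissipative hsq_sa hsq hdom hB hdis)
    obtain ⟨L', hL'⟩ := hSsymm.exists_linearMap_apply_add_eq hSdense hdom hB h𝓦B h𝓦adj
    exact ⟨𝓦, h𝓦adj, disjoint_iff.1 hdisj.symm, L', hsup.symm, hL'⟩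

/-- With `S` closed densely defined symmetric and `V` bounded non-negative
selfadjoint with square root `√V`, the operator `S_{𝓥,L} + iV` is dissipative iff for every
`v ∈ 𝓥` there is `k_v ⊥ ker √V` with `√V k_v = L v` and `Im ⟪v, S* v⟫ ≥ ¼ ‖k_v‖²`;
moreover every dissipative extension of `A = S + iV` is of this form. -/
theorem statement16
    (S : H →ₗ.[ℂ] H) (V sqV : H →L[ℂ] H)
    (hSdense : Dense (S.domain : Set H)) (hSclosed : S.IsClosed) (hSsymm : IsSymmetricP S)
    (hVsa : IsSelfAdjoint V) (hVnn : ∀ f : H, 0 ≤ (⟪f, V f⟫).re)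
    (hsq_sa : IsSelfAdjoint sqV) (hsq_nn : ∀ f : H, 0 ≤ (⟪f, sqV f⟫).re)
    (hsq : ∀ x : H, sqV (sqV x) = V x)
    (𝓥 : Submodule ℂ H) (h𝓥 : 𝓥 ≤ S.adjoint.domain) (h𝓥S : 𝓥 ⊓ S.domain = ⊥)
    (L : 𝓥 →ₗ[ℂ] H) :
    ((∀ (f : S.domain) (v : 𝓥) (hfv : (f : H) + (v : H) ∈ S.adjoint.domain),
        0 ≤ (⟪(f : H) + (v : H),
          S.adjoint ⟨(f : H) + (v : H), hfv⟩ + L v + Complex.I • V ((f : H) + (v : H))⟫).im)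
      ↔ ∀ v : 𝓥, ∃ k : H, (∀ y : H, sqV y = 0 → ⟪y, k⟫ = 0) ∧ sqV k = L v ∧
          ∀ hv : (v : H) ∈ S.adjoint.domain,
            (1 / 4) * ‖k‖ ^ 2 ≤ (⟪(v : H), S.adjoint ⟨(v : H), hv⟩⟫).im) ∧
    ∀ B : H →ₗ.[ℂ] H, S.domain ≤ B.domain →
      (∀ (x : S.domain) (hx : (x : H) ∈ B.domain),
        B ⟨(x : H), hx⟩ = S x + Complex.I • V (x : H)) →
      Dissipative B →
      ∃ (𝓦 : Submodule ℂ H) (_ : 𝓦 ≤ S.adjoint.domain) (_ : 𝓦 ⊓ S.domain = ⊥)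
        (L' : 𝓦 →ₗ[ℂ] H),
        B.domain = S.domain ⊔ 𝓦 ∧
        ∀ (f : S.domain) (w : 𝓦) (hB : (f : H) + (w : H) ∈ B.domain)
          (hadj : (f : H) + (w : H) ∈ S.adjoint.domain),
          B ⟨(f : H) + (w : H), hB⟩
            = S.adjoint ⟨(f : H) + (w : H), hadj⟩ + L' w
              + Complex.I • V ((f : H) + (w : H)) :=
  statement16_general S V sqV hSdense hSsymm hsq_sa hsq 𝓥 h𝓥 L
end
end

section
/- Let S be a closed, densely defined symmetric operator on a complex Hilbert space H, let V be a bounded non-negative selfadjoint operator on H, let 𝒱 ⊆ D(S*) be a subspace with 𝒱 ∩ D(S) = {0}, and let L : 𝒱 → H be linear. Assume that the proper extension S_𝒱 := S*↾_{D(S) ∔ 𝒱} is symmetric, i.e., Im⟨ψ, S*ψ⟩ = 0 for all ψ ∈ D(S) ∔ 𝒱. Then: (a) if S_{𝒱,L} + iV (where S_{𝒱,L} has domain D(S) ∔ 𝒱 and acts as f + v ↦ S*(f+v) + Lv) is dissipative, then L = 0; (b) if L ≠ 0, then the imaginary part of S_{𝒱,L} + iV is not bounded from below: for every γ ≥ 0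 there exists ψ ∈ D(S) ∔ 𝒱, ψ = f + v with f ∈ D(S), v ∈ 𝒱, such that Im⟨ψ, S*ψ + Lv + iVψ⟩ < −γ‖ψ‖². -/
/-!
On `D(S) ∔ 𝓥` the term `S*` contributes nothing to the imaginary part, which therefore equals
`Im ⟪ψ, L v⟫ + Re ⟪ψ, V ψ⟫` for `ψ = f + v`. As a function of `ψ` this is continuous, with a
nonzero linear part when `L v ≠ 0`: at `ψ = (ε i) L v` the linear part is `-ε ‖L v‖²` while the
quadratic part and `γ ‖ψ‖²` are `O(ε²)`. So it lies below `-γ ‖ψ‖²` on a nonempty open set, and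
density of `D(S)` lets us reach that set with `ψ = f + v`, `f ∈ D(S)`.
-/

noncomputable section

open Complex

variable {H : Type*} [NormedAddCommGroup H] [InnerProductSpace ℂ H] [CompleteSpace H]

local notation "⟪" x ", " y "⟫" => @inner ℂ _ _ x y

theorem IsSymmetricP.mem_adjoint_domain {S : H →ₗ.[ℂ] H} (hS : IsSymmetricP S) (f : S.domain) :
    (f : H) ∈ S.adjoint.domain :=
  S.mem_adjoint_domain_of_exists _ ⟨S f, fun g => (hS f g).symm⟩

section

variable {E : Type*} [NormedAddCommGroup E] [InnerProductSpace ℂ E]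

theorem im_inner_add_add_I_smul (ψ a w b : E) :
    (⟪ψ, a + w + I • b⟫).im = (⟪ψ, a⟫).im + (⟪ψ, w⟫).im + (⟪ψ, b⟫).re := by
  simp only [inner_add_right, inner_smul_right, add_im, mul_im, I_re, I_im]
  ring

theorem exists_im_inner_add_re_inner_lt (V : E →L[ℂ] E) {w : E} (hw : w ≠ 0) (γ : ℝ) :
    ∃ ψ : E, (⟪ψ, w⟫).im + (⟪ψ, V ψ⟫).re < -γ * ‖ψ‖ ^ 2 := by
  obtain ⟨ε, hε, hεlt⟩ :=
    exists_pos_mul_lt (by positivity : 0 < ‖w‖ ^ 2) ((⟪w, V w⟫).re + γ * ‖w‖ ^ 2)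
  refine ⟨((ε : ℂ) * I) • w, ?_⟩
  have hlin : (⟪((ε : ℂ) * I) • w, w⟫).im = -ε * ‖w‖ ^ 2 := by
    rw [inner_smul_left, inner_self_eq_norm_sq_to_K]
    simp [mul_im, ← ofReal_pow]
  have hquad : (⟪((ε : ℂ) * I) • w, V (((ε : ℂ) * I) • w)⟫).re = ε ^ 2 * (⟪w, V w⟫).re := by
    have hconj : (starRingEnd ℂ) ((ε : ℂ) * I) * ((ε : ℂ) * I) = ((ε ^ 2 : ℝ) : ℂ) := by
      simp only [map_mul, conj_ofReal, conj_I]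
      push_cast
      linear_combination (-(ε : ℂ) ^ 2) * I_sq
    rw [map_smul, inner_smul_left, inner_smul_right, ← mul_assoc, hconj, re_ofReal_mul]
  have hnorm : ‖((ε : ℂ) * I) • w‖ ^ 2 = ε ^ 2 * ‖w‖ ^ 2 := by
    simp [norm_smul, abs_of_pos hε, mul_pow]
  rw [hlin, hquad, hnorm]
  nlinarith

theorem Dense.exists_im_inner_add_re_inner_lt {s : Set E} (hs : Dense s) (V : E →L[ℂ] E)
    {w : E} (hw : w ≠ 0) (v : E) (γ : ℝ) :
    ∃ f ∈ s, (⟪f + v, w⟫).im + (⟪f + v, V (f + v)⟫).re < -γ * ‖f + v‖ ^ 2 := by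
  obtain ⟨ψ, hψ⟩ := _root_.exists_im_inner_add_re_inner_lt V hw γ
  have hopen : IsOpen {ψ : E | (⟪ψ, w⟫).im + (⟪ψ, V ψ⟫).re < -γ * ‖ψ‖ ^ 2} := by
    apply isOpen_lt <;> fun_prop
  obtain ⟨f, hf, hlt⟩ := hs.exists_mem_open (hopen.preimage (continuous_add_const v))
    ⟨ψ - v, by rwa [Set.mem_preimage, sub_add_cancel]⟩
  exact ⟨f, hf, hlt⟩

end

theorem statement17_general
    (S : H →ₗ.[ℂ] H) (V : H →L[ℂ] H)
    (hSdense : Dense (S.domain : Set H)) (hSsymm : IsSymmetricP S)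
    (𝓥 : Submodule ℂ H) (h𝓥 : 𝓥 ≤ S.adjoint.domain)
    (L : 𝓥 →ₗ[ℂ] H)
    (hsymm𝓥 : ∀ (f : S.domain) (v : 𝓥) (hfv : (f : H) + (v : H) ∈ S.adjoint.domain),
      (⟪(f : H) + (v : H), S.adjoint ⟨(f : H) + (v : H), hfv⟩⟫).im = 0) :
    ((∀ (f : S.domain) (v : 𝓥) (hfv : (f : H) + (v : H) ∈ S.adjoint.domain),
        0 ≤ (⟪(f : H) + (v : H),
          S.adjoint ⟨(f : H) + (v : H), hfv⟩ + L v + Complex.I • V ((f : H) + (v : H))⟫).im)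
      → ∀ v : 𝓥, L v = 0) ∧
    ((∃ v : 𝓥, L v ≠ 0) → ∀ γ : ℝ, 0 ≤ γ →
      ∃ (f : S.domain) (v : 𝓥) (hfv : (f : H) + (v : H) ∈ S.adjoint.domain),
        (⟪(f : H) + (v : H),
          S.adjoint ⟨(f : H) + (v : H), hfv⟩ + L v + Complex.I • V ((f : H) + (v : H))⟫).im
          < -γ * ‖(f : H) + (v : H)‖ ^ 2) := by
  have hfv (f : S.domain) (v : 𝓥) : (f : H) + (v : H) ∈ S.adjoint.domain :=
    add_mem (hSsymm.mem_adjoint_domain f) (h𝓥 v.2)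
  have unbounded (v : 𝓥) (hv : L v ≠ 0) (γ : ℝ) : ∃ f : S.domain,
      (⟪(f : H) + (v : H), S.adjoint ⟨(f : H) + (v : H), hfv f v⟩ + L v
        + I • V ((f : H) + (v : H))⟫).im < -γ * ‖(f : H) + (v : H)‖ ^ 2 := by
    obtain ⟨f, hf, hlt⟩ := hSdense.exists_im_inner_add_re_inner_lt V hv (v : H) γ
    refine ⟨⟨f, hf⟩, ?_⟩
    rw [im_inner_add_add_I_smul, hsymm𝓥, zero_add]
    exact hlt
  refine ⟨fun hdiss v => ?_, fun ⟨v, hv⟩ γ _ => ?_⟩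
  · by_contra hv
    obtain ⟨f, hf⟩ := unbounded v hv 0
    have := hdiss f v (hfv f v)
    simp only [neg_zero, zero_mul] at hf
    linarith
  · obtain ⟨f, hf⟩ := unbounded v hv γ
    exact ⟨f, v, hfv f v, hf⟩

/-- If the proper extension `S_𝓥 = S*↾_{D(S) ∔ 𝓥}` is symmetric then
(a) dissipativity of `S_{𝓥,L} + iV` forces `L = 0`, and (b) if `L ≠ 0` the imaginary part
of `S_{𝓥,L} + iV` is not bounded from below. -/
theorem statement17
    (S : H →ₗ.[ℂ] H) (V : H →L[ℂ] H)
    (hSdense : Dense (S.domain : Set H)) (hSclosed : S.IsClosed) (hSsymm : IsSymmetricP S)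
    (hVsa : IsSelfAdjoint V) (hVnn : ∀ f : H, 0 ≤ (⟪f, V f⟫).re)
    (𝓥 : Submodule ℂ H) (h𝓥 : 𝓥 ≤ S.adjoint.domain) (h𝓥S : 𝓥 ⊓ S.domain = ⊥)
    (L : 𝓥 →ₗ[ℂ] H)
    (hsymm𝓥 : ∀ (f : S.domain) (v : 𝓥) (hfv : (f : H) + (v : H) ∈ S.adjoint.domain),
      (⟪(f : H) + (v : H), S.adjoint ⟨(f : H) + (v : H), hfv⟩⟫).im = 0) :
    ((∀ (f : S.domain) (v : 𝓥) (hfv : (f : H) + (v : H) ∈ S.adjoint.domain),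
        0 ≤ (⟪(f : H) + (v : H),
          S.adjoint ⟨(f : H) + (v : H), hfv⟩ + L v + Complex.I • V ((f : H) + (v : H))⟫).im)
      → ∀ v : 𝓥, L v = 0) ∧
    ((∃ v : 𝓥, L v ≠ 0) → ∀ γ : ℝ, 0 ≤ γ →
      ∃ (f : S.domain) (v : 𝓥) (hfv : (f : H) + (v : H) ∈ S.adjoint.domain),
        (⟪(f : H) + (v : H),
          S.adjoint ⟨(f : H) + (v : H), hfv⟩ + L v + Complex.I • V ((f : H) + (v : H))⟫).im
          < -γ * ‖(f : H) + (v : H)‖ ^ 2) :=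
  statement17_general S V hSdense hSsymm 𝓥 h𝓥 L hsymm𝓥
end
end
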